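/- arXiv:2505.09120 — 5 statements merged into one kernel-verified Lean document; each statement's English description precedes it below -/
import Mathlib

section
/- Let S be a triangulated category with a good metric {M_i}. If a map of Cauchy sequences f'_* : a'_* → b'_* has a subsequence f_* : a_* → b_* which is a type-n morphism, then f'_* itself is a type-n morphism. -/
/-!
Restricting a Cauchy completion `c_*` of `f'_*` along `ρ` gives a Cauchy completion of the
subsequence, so `c_{ρ k} ∈ M n` for all large `k`. For `i ≥ ρ k` with `k` large, the cone of
`c_{ρ k} → c_i` lies in `M n` because `c_*` is Cauchy, and closure of `M n` under extensions
puts `c_i` in `M n` as well.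
-/

open CategoryTheory CategoryTheory.Limits CategoryTheory.Pretriangulated ZeroObject

universe v u

namespace Paper

variable (S : Type u) [Category.{v} S] [HasZeroObject S] [HasShift S ℤ]
  [Preadditive S] [∀ n : ℤ, (shiftFunctor S n).Additive] [Pretriangulated S]

/-- The cone of `f` lies in `P`: every completion of `f` to a distinguished triangle
has its third object in `P`. -/
def coneIn (P : Set S) {X Y : S} (f : X ⟶ Y) : Prop :=
  ∀ (Z : S) (g : Y ⟶ Z) (h : Z ⟶ X⟦(1 : ℤ)⟧),
    Triangle.mk f g h ∈ (distTriang S) → Z ∈ P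

/-- A good metric on the triangulated category `S`: a descending chain of full
(iso-closed) subcategories `M i`, each containing `0`, closed under extensions, and with
`Σ^{-1} M (i+1) ∪ M (i+1) ∪ Σ M (i+1) ⊆ M i`. -/
structure GoodMetric : Type (max u v) where
  M : ℕ → Set S
  zero_mem : ∀ i, (0 : S) ∈ M i
  iso_closed : ∀ i ⦃X Y : S⦄, (X ≅ Y) → X ∈ M i → Y ∈ M i
  anti : ∀ i, M (i + 1) ⊆ M i
  shift_mem : ∀ i ⦃X : S⦄, X ∈ M (i + 1) → X⟦(1 : ℤ)⟧ ∈ M i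
  shiftNeg_mem : ∀ i ⦃X : S⦄, X ∈ M (i + 1) → X⟦(-1 : ℤ)⟧ ∈ M i
  ext_mem : ∀ i (T : Triangle S), T ∈ (distTriang S) →
    T.obj₁ ∈ M i → T.obj₃ ∈ M i → T.obj₂ ∈ M i

variable {S}

/-- A sequence `a : ℕ ⥤ S` is Cauchy with respect to a good metric: for every `n` there
is `N` such that for all `j ≥ i ≥ N` the cone of `a i ⟶ a j` lies in `M n`. -/
def IsCauchy (μ : GoodMetric S) (a : ℕ ⥤ S) : Prop :=
  ∀ n : ℕ, ∃ N : ℕ, ∀ i j : ℕ, N ≤ i → ∀ h : i ≤ j,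
    coneIn S (μ.M n) (a.map (homOfLE h))

/-- A completion of a map of sequences `f : a ⟶ b` to a sequence of distinguished
triangles `a_* ⟶ b_* ⟶ c_* ⟶ Σ a_*`. -/
structure TriCompletion {a b : ℕ ⥤ S} (f : a ⟶ b) : Type (max u v) where
  c : ℕ ⥤ S
  g : b ⟶ c
  h : c ⟶ a ⋙ shiftFunctor S (1 : ℤ)
  dist : ∀ i, Triangle.mk (f.app i) (g.app i) (h.app i) ∈ distTriang S

/-- `f : a ⟶ b` is a type-`n` morphism of Cauchy sequences: in any completion to a
Cauchy sequence of distinguished triangles the third objects lie in `M n` eventually. -/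
def IsTypeN (μ : GoodMetric S) (n : ℕ) {a b : ℕ ⥤ S} (f : a ⟶ b) : Prop :=
  ∀ T : TriCompletion f, IsCauchy μ T.c → ∃ N, ∀ i, N ≤ i → T.c.obj i ∈ μ.M n

theorem GoodMetric.mem_of_coneIn (μ : GoodMetric S) {n : ℕ} {X Y : S} {f : X ⟶ Y}
    (hf : coneIn S (μ.M n) f) (hX : X ∈ μ.M n) : Y ∈ μ.M n := by
  obtain ⟨Z, g, h, mem⟩ := distinguished_cocone_triangle f
  exact μ.ext_mem n _ mem hX (hf Z g h mem)

namespace IsCauchy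

variable {μ : GoodMetric S} {c : ℕ ⥤ S}

theorem comp_strictMono (hc : IsCauchy μ c) {ρ : ℕ → ℕ} (hρ : StrictMono ρ) :
    IsCauchy μ (hρ.monotone.functor ⋙ c) := by
  intro m
  obtain ⟨N, hN⟩ := hc m
  exact ⟨N, fun i j hi hij => hN (ρ i) (ρ j) (hi.trans hρ.le_apply) (hρ.monotone hij)⟩

theorem eventually_mem_of_frequently_mem (hc : IsCauchy μ c) {n : ℕ}
    (hfreq : ∀ N, ∃ k, N ≤ k ∧ c.obj k ∈ μ.M n) :
    ∃ N, ∀ i, N ≤ i → c.obj i ∈ μ.M n := by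
  obtain ⟨N, hN⟩ := hc n
  obtain ⟨k, hNk, hk⟩ := hfreq N
  exact ⟨k, fun i hki => μ.mem_of_coneIn (hN k i hNk hki) hk⟩

end IsCauchy

def TriCompletion.whiskerLeft {a b : ℕ ⥤ S} {f : a ⟶ b} (F : ℕ ⥤ ℕ) (T : TriCompletion f) :
    TriCompletion (Functor.whiskerLeft F f) where
  c := F ⋙ T.c
  g := Functor.whiskerLeft F T.g
  h := Functor.whiskerLeft F T.h
  dist i := T.dist (F.obj i)

theorem statement0_general (μ : GoodMetric S) {a' b' : ℕ ⥤ S} (f' : a' ⟶ b')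
    (n : ℕ)
    (ρ : ℕ → ℕ) (hρ : StrictMono ρ)
    (hsub : IsTypeN μ n (Functor.whiskerLeft hρ.monotone.functor f')) :
    IsTypeN μ n f' := by
  intro T hT
  obtain ⟨K, hK⟩ := hsub (T.whiskerLeft hρ.monotone.functor) (hT.comp_strictMono hρ)
  refine hT.eventually_mem_of_frequently_mem fun N => ⟨ρ (max N K), ?_, ?_⟩
  · exact (le_max_left N K).trans hρ.le_apply
  · exact hK (max N K) (le_max_right N K)

theorem statement0 (μ : GoodMetric S) {a' b' : ℕ ⥤ S} (f' : a' ⟶ b')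
    (ha' : IsCauchy μ a') (hb' : IsCauchy μ b') (n : ℕ)
    (ρ : ℕ → ℕ) (hρ : StrictMono ρ)
    (hsub : IsTypeN μ n (Functor.whiskerLeft hρ.monotone.functor f')) :
    IsTypeN μ n f' :=
  statement0_general μ f' n ρ hρ hsub

end Paper
end

section
/- Let S be a triangulated category with a good metric {M_i}. Suppose that every Cauchy sequence whose transition maps are all zero has, for each n, all but finitely many terms in M_n. Then for any object F of the completion L(S) and any two Cauchy sequences a_*, b_* with colim Y(a_*) = F = colim Y(b_*), the identity map id : F → F is of type-n with respect to (a_*, b_*) for every n ≥ 1. -/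
/-!
Since each stage `a i` maps into the filtered colimit `colim Y(b)`, it factors through some
`b j`; collecting these factorisations along a subsequence `σ` gives `f : a ⟶ b ∘ σ` with
`colim Y(f)` the given isomorphism. Elementwise, `colim Y(f)` being an isomorphism says that a
map into `a i` killed by `f` dies further along `a`, and a map into `b i` lifts through `f`
further along `b`. For a completion `a i ⟶ b (σ i) ⟶ c i ⟶ Σ a i`, exactness of `Hom(X, -)`
on the triangles then shows every transition map of `c` eventually vanishes. A subsequence of
`c` thus has zero transition maps, so it lies eventually in `M (n + 1)`; the Cauchy condition
and closure of `M n` under extensions spread this to all late terms, which lie in `M n`.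
-/

open CategoryTheory CategoryTheory.Limits CategoryTheory.Pretriangulated ZeroObject

universe v u

namespace Paper

variable (S : Type u) [Category.{v} S] [HasZeroObject S] [HasShift S ℤ]
  [Preadditive S] [∀ n : ℤ, (shiftFunctor S n).Additive] [Pretriangulated S]

variable {S}

/-- The colimit in `Mod-S = Sᵒᵖ ⥤ AddCommGrp` of the Yoneda image of a sequence. -/
noncomputable def colimY (a : ℕ ⥤ S) : Sᵒᵖ ⥤ AddCommGrpCat.{v} :=
  colimit (a ⋙ preadditiveYoneda)

/-- The induced map on colimits of Yoneda images. -/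
noncomputable def colimYmap {a b : ℕ ⥤ S} (f : a ⟶ b) : colimY a ⟶ colimY b :=
  colimMap (Functor.whiskerRight f preadditiveYoneda)

/-- A morphism `F : colim Y(a) ⟶ colim Y(b)` in `L(S)` is of type-`n` with respect to
`(a, b)` if some map of subsequences `f : a∘ρ ⟶ b∘σ` with `F = colim Y(f)` (compatibly
with the canonical maps from the colimits over the subsequences) is a type-`n`
morphism of Cauchy sequences. -/
def MorTypeN (μ : GoodMetric S) (n : ℕ) (a b : ℕ ⥤ S)
    (F : colimY a ⟶ colimY b) : Prop :=
  ∃ (ρ σ : ℕ → ℕ) (hρ : StrictMono ρ) (hσ : StrictMono σ)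
    (f : hρ.monotone.functor ⋙ a ⟶ hσ.monotone.functor ⋙ b),
    IsTypeN μ n f ∧
      colimit.pre (a ⋙ preadditiveYoneda) hρ.monotone.functor ≫ F =
        colimMap (Functor.whiskerRight f preadditiveYoneda) ≫
          colimit.pre (b ⋙ preadditiveYoneda) hσ.monotone.functor

end Paper

open Opposite

lemma CategoryTheory.Adjunction.comp_map_eq_zero_iff {C D : Type*} [Category C] [Category D]
    [HasZeroMorphisms C] [HasZeroMorphisms D] {L : C ⥤ D} {R : D ⥤ C} (adj : L ⊣ R)
    [L.PreservesZeroMorphisms] {X : C} {Y Y' : D} (u : X ⟶ R.obj Y) (g : Y ⟶ Y') :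
    u ≫ R.map g = 0 ↔ (adj.homEquiv X Y).symm u ≫ g = 0 := by
  rw [← adj.homEquiv_naturality_right_symm, ← (adj.homEquiv X Y').symm.injective.eq_iff]
  simp [Adjunction.homEquiv_counit]

namespace Paper

instance : PreservesFilteredColimitsOfSize.{0, 0} (forget AddCommGrpCat.{v}) :=
  preservesFilteredColimitsOfSize_shrink _

section Yoneda

variable {C : Type u} [Category.{v} C] [Preadditive C]

lemma preadditiveYoneda_hom_ext {X : C} {G : Cᵒᵖ ⥤ AddCommGrpCat.{v}}
    {t t' : preadditiveYoneda.obj X ⟶ G} (h : t.app (op X) (𝟙 X) = t'.app (op X) (𝟙 X)) :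
    t = t' := by
  ext ⟨Z⟩ g
  have hg : (preadditiveYoneda.obj X).map g.op (𝟙 X) = g := Category.comp_id g
  have ht := NatTrans.naturality_apply t g.op (𝟙 X)
  have ht' := NatTrans.naturality_apply t' g.op (𝟙 X)
  rw [hg] at ht ht'
  exact ht.trans (h ▸ ht'.symm)

lemma preadditiveYoneda_map_comp_app_id {X W : C} {G : Cᵒᵖ ⥤ AddCommGrpCat.{v}} (y : X ⟶ W)
    (t : preadditiveYoneda.obj W ⟶ G) :
    (preadditiveYoneda.map y ≫ t).app (op X) (𝟙 X) = t.app (op X) y :=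
  congrArg (t.app (op X)) (Category.id_comp y)

variable {J : Type} [SmallCategory J]

lemma colimMap_whiskerRight_preadditiveYoneda_app_ι_app {a b : J ⥤ C} (f : a ⟶ b) {X : C}
    {k : J} (z : X ⟶ a.obj k) :
    (colimMap (Functor.whiskerRight f preadditiveYoneda)).app (op X)
        ((colimit.ι (a ⋙ preadditiveYoneda) k).app (op X) z) =
      (colimit.ι (b ⋙ preadditiveYoneda) k).app (op X) (z ≫ f.app k) := by
  change ((colimit.ι (a ⋙ preadditiveYoneda) k ≫
    colimMap (Functor.whiskerRight f preadditiveYoneda)).app (op X)) z = _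
  rw [ι_colimMap]
  rfl

variable [IsFiltered J]

lemma colimit_preadditiveYoneda_exists_rep (d : J ⥤ C) {X : C}
    (x : (colimit (d ⋙ preadditiveYoneda)).obj (op X)) :
    ∃ (j : J) (y : X ⟶ d.obj j), (colimit.ι (d ⋙ preadditiveYoneda) j).app (op X) y = x := by
  let e := colimitObjIsoColimitCompEvaluation (d ⋙ preadditiveYoneda) (op X)
  obtain ⟨j, y, hy⟩ := Concrete.colimit_exists_rep _ (e.hom x)
  refine ⟨j, y, ?_⟩
  rw [← colimitObjIsoColimitCompEvaluation_ι_inv, ConcreteCategory.comp_apply, hy,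
    Iso.hom_inv_id_apply]

lemma colimit_preadditiveYoneda_exists_of_rep_eq (d : J ⥤ C) {X : C} {j j' : J}
    (y : X ⟶ d.obj j) (y' : X ⟶ d.obj j')
    (h : (colimit.ι (d ⋙ preadditiveYoneda) j).app (op X) y =
      (colimit.ι (d ⋙ preadditiveYoneda) j').app (op X) y') :
    ∃ (k : J) (u : j ⟶ k) (u' : j' ⟶ k), y ≫ d.map u = y' ≫ d.map u' := by
  apply Concrete.colimit_exists_of_rep_eq
    ((d ⋙ preadditiveYoneda) ⋙ (evaluation _ _).obj (op X))
  rw [← colimitObjIsoColimitCompEvaluation_ι_app_hom,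
    ← colimitObjIsoColimitCompEvaluation_ι_app_hom]
  exact congrArg (colimitObjIsoColimitCompEvaluation (d ⋙ preadditiveYoneda) (op X)).hom h

lemma exists_eq_preadditiveYoneda_map_comp_colimit_ι (d : J ⥤ C) {X : C}
    (t : preadditiveYoneda.obj X ⟶ colimit (d ⋙ preadditiveYoneda)) :
    ∃ (j : J) (y : X ⟶ d.obj j),
      t = preadditiveYoneda.map y ≫ colimit.ι (d ⋙ preadditiveYoneda) j := by
  obtain ⟨j, y, hy⟩ := colimit_preadditiveYoneda_exists_rep d (t.app (op X) (𝟙 X))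
  exact ⟨j, y, preadditiveYoneda_hom_ext (by rw [preadditiveYoneda_map_comp_app_id, hy])⟩

lemma exists_of_preadditiveYoneda_map_comp_colimit_ι_eq (d : J ⥤ C) {X : C} {j j' : J}
    (y : X ⟶ d.obj j) (y' : X ⟶ d.obj j')
    (h : preadditiveYoneda.map y ≫ colimit.ι (d ⋙ preadditiveYoneda) j =
      preadditiveYoneda.map y' ≫ colimit.ι (d ⋙ preadditiveYoneda) j') :
    ∃ (k : J) (u : j ⟶ k) (u' : j' ⟶ k), y ≫ d.map u = y' ≫ d.map u' := by
  apply colimit_preadditiveYoneda_exists_of_rep_eq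
  simpa only [preadditiveYoneda_map_comp_app_id] using congr(($h).app (op X) (𝟙 X))

variable {a b : J ⥤ C} (f : a ⟶ b) [IsIso (colimMap (Functor.whiskerRight f preadditiveYoneda))]

lemma exists_comp_map_eq_zero_of_comp_app_eq_zero {X : C} {k : J} (z : X ⟶ a.obj k)
    (hz : z ≫ f.app k = 0) : ∃ (k' : J) (u : k ⟶ k'), z ≫ a.map u = 0 := by
  have hι : (colimit.ι (a ⋙ preadditiveYoneda) k).app (op X) z =
      (colimit.ι (a ⋙ preadditiveYoneda) k).app (op X) 0 := by
    apply (ConcreteCategory.bijective_of_isIso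
      ((colimMap (Functor.whiskerRight f preadditiveYoneda)).app (op X))).1
    refine (colimMap_whiskerRight_preadditiveYoneda_app_ι_app f z).trans ?_
    refine Eq.trans ?_ (colimMap_whiskerRight_preadditiveYoneda_app_ι_app f 0).symm
    rw [hz, zero_comp]
  obtain ⟨k', u, u', hu⟩ := colimit_preadditiveYoneda_exists_of_rep_eq a z 0 hι
  exact ⟨k', u, hu.trans zero_comp⟩

lemma exists_comp_app_eq_comp_map {X : C} {k : J} (w : X ⟶ b.obj k) :
    ∃ (k' : J) (u : k ⟶ k') (z : X ⟶ a.obj k'), z ≫ f.app k' = w ≫ b.map u := by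
  obtain ⟨x, hx⟩ := (ConcreteCategory.bijective_of_isIso
    ((colimMap (Functor.whiskerRight f preadditiveYoneda)).app (op X))).2
      ((colimit.ι (b ⋙ preadditiveYoneda) k).app (op X) w)
  obtain ⟨k₀, z₀, rfl⟩ := colimit_preadditiveYoneda_exists_rep a x
  rw [colimMap_whiskerRight_preadditiveYoneda_app_ι_app] at hx
  obtain ⟨k', u₀, u, hu⟩ := colimit_preadditiveYoneda_exists_of_rep_eq b _ _ hx
  refine ⟨k', u, z₀ ≫ a.map u₀, ?_⟩
  rw [Category.assoc, f.naturality, ← Category.assoc, hu]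

end Yoneda

lemma exists_colimMap_comp_colimit_pre_eq {C : Type u} [Category.{v} C] [Preadditive C]
    (a b : ℕ ⥤ C)
    (F : colimit (a ⋙ preadditiveYoneda) ⟶ colimit (b ⋙ preadditiveYoneda)) :
    ∃ (σ : ℕ → ℕ) (hσ : StrictMono σ) (f : a ⟶ hσ.monotone.functor ⋙ b),
      colimMap (Functor.whiskerRight f preadditiveYoneda) ≫
        colimit.pre (b ⋙ preadditiveYoneda) hσ.monotone.functor = F := by
  choose j y hy using fun i ↦
    exists_eq_preadditiveYoneda_map_comp_colimit_ι b (colimit.ι (a ⋙ preadditiveYoneda) i ≫ F)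
  have hcompat : ∀ i, ∃ (k : ℕ) (u : j i ⟶ k) (u' : j (i + 1) ⟶ k),
      y i ≫ b.map u = (a.map (homOfLE (Nat.le_succ i)) ≫ y (i + 1)) ≫ b.map u' := by
    intro i
    apply exists_of_preadditiveYoneda_map_comp_colimit_ι_eq
    rw [← hy, ← colimit.w (a ⋙ preadditiveYoneda) (homOfLE (Nat.le_succ i)), Category.assoc,
      hy, Functor.map_comp, Category.assoc]
    rfl
  choose K u u' hK using hcompat
  -- With `K i ≤ σ i`, the maps `y i` and `a.map _ ≫ y (i + 1)` agree in `b (σ (i + 1))`.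
  obtain ⟨σ, hσ, hKσ⟩ := Filter.extraction_forall_of_eventually' (P := fun i k ↦ K i ≤ k)
    fun i ↦ ⟨K i, fun _ ↦ id⟩
  have hjσ : ∀ i, j i ≤ σ i := fun i ↦ (leOfHom (u i)).trans (hKσ i)
  let f : a ⟶ hσ.monotone.functor ⋙ b := NatTrans.ofSequence
    (fun i ↦ y i ≫ b.map (homOfLE (hjσ i))) fun i ↦ by
      have hKσ' : K i ≤ σ (i + 1) := (hKσ i).trans (hσ (Nat.lt_succ_self i)).le
      change a.map _ ≫ y (i + 1) ≫ b.map (homOfLE (hjσ (i + 1))) =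
        (y i ≫ b.map (homOfLE (hjσ i))) ≫ b.map (homOfLE (hσ.monotone i.le_succ))
      rw [Category.assoc, ← b.map_comp,
        Subsingleton.elim (homOfLE (hjσ i) ≫ _) (u i ≫ homOfLE hKσ'),
        Subsingleton.elim (homOfLE (hjσ (i + 1))) (u' i ≫ homOfLE hKσ'), b.map_comp,
        b.map_comp, ← Category.assoc (y i), hK]
      simp only [Category.assoc]
  refine ⟨σ, hσ, f, colimit.hom_ext fun i ↦ ?_⟩
  rw [ι_colimMap_assoc, hy]
  refine (congrArg _ (colimit.ι_pre (b ⋙ preadditiveYoneda) hσ.monotone.functor i)).trans ?_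
  rw [← colimit.w (b ⋙ preadditiveYoneda) (homOfLE (hjσ i)), ← Category.assoc]
  exact congrArg (· ≫ _) (preadditiveYoneda.map_comp _ _)

lemma exists_strictMono_map_succ_eq_zero {C : Type*} [Category C] [HasZeroMorphisms C]
    (c : ℕ ⥤ C) (hc : ∀ i, ∃ (j : ℕ) (u : i ⟶ j), c.map u = 0) :
    ∃ (ρ : ℕ → ℕ) (hρ : StrictMono ρ),
      ∀ m, (hρ.monotone.functor ⋙ c).map (homOfLE (Nat.le_succ m)) = 0 := by
  have hnext : ∀ i, ∃ j, i < j ∧ ∀ u : i ⟶ j, c.map u = 0 := by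
    intro i
    obtain ⟨j, u, hu⟩ := hc i
    refine ⟨j + 1, Nat.lt_succ_of_le (leOfHom u), fun v ↦ ?_⟩
    rw [Subsingleton.elim v (u ≫ homOfLE j.le_succ), c.map_comp, hu, zero_comp]
  choose ψ hψ hψ₀ using hnext
  let ρ : ℕ → ℕ := fun m ↦ Nat.rec 0 (fun _ r ↦ ψ r) m
  exact ⟨ρ, strictMono_nat_of_lt_succ fun m ↦ hψ (ρ m), fun m ↦ hψ₀ (ρ m) _⟩

section Shift

variable {C : Type u} [Category.{v} C] [Preadditive C] [HasShift C ℤ]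

lemma exists_comp_shift_map_eq_zero {J : Type} [SmallCategory J] [IsFiltered J] {a b : J ⥤ C}
    (f : a ⟶ b) [IsIso (colimMap (Functor.whiskerRight f preadditiveYoneda))] {X : C} {k : J}
    (w : X ⟶ (a.obj k)⟦(1 : ℤ)⟧) (hw : w ≫ (f.app k)⟦(1 : ℤ)⟧' = 0) :
    ∃ (k' : J) (u : k ⟶ k'), w ≫ (a.map u)⟦(1 : ℤ)⟧' = 0 := by
  let adj := (shiftEquiv C (1 : ℤ)).symm.toAdjunction
  obtain ⟨k', u, hu⟩ := exists_comp_map_eq_zero_of_comp_app_eq_zero f _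
    ((adj.comp_map_eq_zero_iff w (f.app k)).1 hw)
  exact ⟨k', u, (adj.comp_map_eq_zero_iff w (a.map u)).2 hu⟩

end Shift

section Triangulated

variable {S : Type u} [Category.{v} S] [HasZeroObject S] [HasShift S ℤ] [Preadditive S]
  [∀ n : ℤ, (shiftFunctor S n).Additive] [Pretriangulated S]

lemma TriCompletion.exists_map_eq_zero {a b : ℕ ⥤ S} {f : a ⟶ b}
    [IsIso (colimMap (Functor.whiskerRight f preadditiveYoneda))] (T : TriCompletion f)
    (i : ℕ) : ∃ (j : ℕ) (u : i ⟶ j), T.c.map u = 0 := by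
  obtain ⟨j, u, hu⟩ :=
    exists_comp_shift_map_eq_zero f (T.h.app i) (comp_distTriang_mor_zero₃₁ _ (T.dist i))
  obtain ⟨w, hw⟩ : ∃ w : T.c.obj i ⟶ b.obj j, T.c.map u = w ≫ T.g.app j :=
    Triangle.coyoneda_exact₃ _ (T.dist j) (T.c.map u) ((T.h.naturality u).trans hu)
  obtain ⟨k, v, z, hz⟩ := exists_comp_app_eq_comp_map f w
  refine ⟨k, u ≫ v, ?_⟩
  calc T.c.map (u ≫ v) = (w ≫ b.map v) ≫ T.g.app k := by
        rw [T.c.map_comp, hw]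
        simp only [Category.assoc, NatTrans.naturality]
    _ = z ≫ f.app k ≫ T.g.app k := by rw [← hz, Category.assoc]
    _ = 0 := by
        have h₁₂ : f.app k ≫ T.g.app k = 0 := comp_distTriang_mor_zero₁₂ _ (T.dist k)
        rw [h₁₂, comp_zero]

section Cauchy

variable {μ : GoodMetric S} {c : ℕ ⥤ S}

lemma IsCauchy.comp_strictMono_s3 (hc : IsCauchy μ c) {ρ : ℕ → ℕ} (hρ : StrictMono ρ) :
    IsCauchy μ (hρ.monotone.functor ⋙ c) := fun n ↦ by
  obtain ⟨N, hN⟩ := hc n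
  exact ⟨N, fun i j hi hij ↦ hN (ρ i) (ρ j) (hi.trans hρ.le_apply) (hρ.monotone hij)⟩

lemma IsCauchy.eventually_mem_of_frequently_mem_s3 (hc : IsCauchy μ c) {n : ℕ}
    (h : ∀ i, ∃ j, i ≤ j ∧ c.obj j ∈ μ.M (n + 1)) :
    ∃ N, ∀ i, N ≤ i → c.obj i ∈ μ.M n := by
  obtain ⟨N, hN⟩ := hc (n + 1)
  refine ⟨N, fun i hi ↦ ?_⟩
  obtain ⟨j, hij, hj⟩ := h i
  obtain ⟨Z, g, h, hT⟩ := distinguished_cocone_triangle (c.map (homOfLE hij))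
  exact μ.ext_mem n _ (inv_rot_of_distTriang _ hT)
    (μ.shiftNeg_mem n (hN i j hi hij Z g h hT)) (μ.anti n hj)

end Cauchy

theorem isTypeN_of_isIso_colimMap (μ : GoodMetric S)
    (hzero : ∀ c : ℕ ⥤ S, IsCauchy μ c →
      (∀ i, c.map (homOfLE (Nat.le_succ i)) = 0) →
      ∀ n : ℕ, ∃ N, ∀ i, N ≤ i → c.obj i ∈ μ.M n)
    {a b : ℕ ⥤ S} (f : a ⟶ b) [IsIso (colimMap (Functor.whiskerRight f preadditiveYoneda))]
    (n : ℕ) : IsTypeN μ n f := by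
  intro T hc
  obtain ⟨ρ, hρ, hρ₀⟩ := exists_strictMono_map_succ_eq_zero T.c T.exists_map_eq_zero
  obtain ⟨N, hN⟩ := hzero _ (hc.comp_strictMono_s3 hρ) hρ₀ (n + 1)
  exact hc.eventually_mem_of_frequently_mem_s3 fun i ↦
    ⟨ρ (max i N), (le_max_left i N).trans hρ.le_apply, hN _ (le_max_right i N)⟩

theorem statement3_general (μ : GoodMetric S)
    (hzero : ∀ c : ℕ ⥤ S, IsCauchy μ c →
      (∀ i, c.map (homOfLE (Nat.le_succ i)) = 0) →
      ∀ n : ℕ, ∃ N, ∀ i, N ≤ i → c.obj i ∈ μ.M n)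
    {a b : ℕ ⥤ S} (h : colimY a = colimY b) (n : ℕ) :
    MorTypeN μ n a b (eqToHom h) := by
  obtain ⟨σ, hσ, f, hf⟩ := exists_colimMap_comp_colimit_pre_eq a b (eqToHom h)
  have : hσ.monotone.functor.Final :=
    hσ.monotone.final_functor_iff.2 fun i ↦ ⟨i, hσ.le_apply⟩
  have : IsIso (colimMap (Functor.whiskerRight f preadditiveYoneda)) := by
    have : IsIso (colimMap (Functor.whiskerRight f preadditiveYoneda) ≫
      colimit.pre (b ⋙ preadditiveYoneda) hσ.monotone.functor) := by
      rw [hf]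
      exact (inferInstance : IsIso (eqToHom h))
    exact IsIso.of_isIso_comp_right _ (colimit.pre (b ⋙ preadditiveYoneda) hσ.monotone.functor)
  -- `strictMono_id.monotone.functor ⋙ a` is definitionally `a`, so `f` serves with `ρ = id`.
  refine ⟨id, σ, strictMono_id, hσ, f, isTypeN_of_isIso_colimMap μ hzero f n, ?_⟩
  refine (congrArg (colimit.pre (a ⋙ preadditiveYoneda) strictMono_id.monotone.functor ≫ ·)
    hf.symm).trans (colimit.hom_ext fun i ↦ ?_)
  rw [colimit.ι_pre_assoc]
  rfl

/-- Lemma 3.979: if every Cauchy sequence with vanishing transition maps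
has, for each `n`, all but finitely many terms in `M n`, then for any object
`F = colim Y(a) = colim Y(b)` of the completion the identity map is of type-`n`
with respect to `(a, b)` for every `n ≥ 1`. -/
theorem statement3 (μ : GoodMetric S)
    (hzero : ∀ c : ℕ ⥤ S, IsCauchy μ c →
      (∀ i, c.map (homOfLE (Nat.le_succ i)) = 0) →
      ∀ n : ℕ, ∃ N, ∀ i, N ≤ i → c.obj i ∈ μ.M n)
    {a b : ℕ ⥤ S} (ha : IsCauchy μ a) (hb : IsCauchy μ b)
    (h : colimY a = colimY b) (n : ℕ) (hn : 1 ≤ n) :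
    MorTypeN μ n a b (eqToHom h) :=
  statement3_general μ hzero h n

end Triangulated

end Paper
end

section
/- Let S be a triangulated category with a good metric {M_i}. In Mod-S the right orthogonal of Y(M_i) equals the right orthogonal of L_i: that is, an object X of Mod-S satisfies Hom(Y(m), X) = 0 for all m ∈ M_i if and only if Hom(F, X) = 0 for every F ∈ L_i. Moreover, for a representable object Y(s), one has Hom(Y(s), Y(m)) = 0 for all m ∈ M_i if and only if Hom(Y(s), F) = 0 for all F ∈ L_i. -/
open CategoryTheory CategoryTheory.Limits CategoryTheory.Pretriangulated ZeroObject

universe v u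

namespace Paper

variable (S : Type u) [Category.{v} S] [HasZeroObject S] [HasShift S ℤ]
  [Preadditive S] [∀ n : ℤ, (shiftFunctor S n).Additive] [Pretriangulated S]

variable {S}

/-- Membership in `L_P`: colimits of Yoneda images of Cauchy sequences contained in `P`. -/
def InLsub (μ : GoodMetric S) (P : Set S) (X : Sᵒᵖ ⥤ AddCommGrpCat.{v}) : Prop :=
  ∃ a : ℕ ⥤ S, IsCauchy μ a ∧ (∀ i, a.obj i ∈ P) ∧ Nonempty (colimY a ≅ X)

/-- Membership in `L(S)`: colimits of Yoneda images of Cauchy sequences. -/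
def InL (μ : GoodMetric S) (X : Sᵒᵖ ⥤ AddCommGrpCat.{v}) : Prop :=
  ∃ a : ℕ ⥤ S, IsCauchy μ a ∧ Nonempty (colimY a ≅ X)

/-- Membership in `𝔖(S) = L(S) ∩ ⋃ₙ Y(Mₙ)^⊥`. -/
def InFrak (μ : GoodMetric S) (X : Sᵒᵖ ⥤ AddCommGrpCat.{v}) : Prop :=
  InL μ X ∧ ∃ n, ∀ m ∈ μ.M n, ∀ φ : preadditiveYoneda.obj m ⟶ X, φ = 0

/-- Membership in `N_i = L_i ∩ 𝔖(S)`. -/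
def InN (μ : GoodMetric S) (i : ℕ) (X : Sᵒᵖ ⥤ AddCommGrpCat.{v}) : Prop :=
  InLsub μ (μ.M i) X ∧ InFrak μ X

/-- A Cauchy sequence of distinguished triangles in `S`. -/
structure CauchyTriSeq (μ : GoodMetric S) : Type (max u v) where
  a : ℕ ⥤ S
  b : ℕ ⥤ S
  f : a ⟶ b
  ha : IsCauchy μ a
  hb : IsCauchy μ b
  comp : TriCompletion f
  hc : IsCauchy μ comp.c

/-- `(A, B, C, u, v)` underlies a strong triangle in `L(S)`: it is isomorphic to the
colimit of the Yoneda image of a Cauchy sequence of distinguished triangles. -/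
def StrongTriangleOn (μ : GoodMetric S) (A B C : Sᵒᵖ ⥤ AddCommGrpCat.{v})
    (u : A ⟶ B) (v : B ⟶ C) : Prop :=
  ∃ (T : CauchyTriSeq μ) (eA : colimY T.a ≅ A) (eB : colimY T.b ≅ B)
    (eC : colimY T.comp.c ≅ C),
    colimYmap T.f ≫ eB.hom = eA.hom ≫ u ∧
    colimYmap T.comp.g ≫ eC.hom = eB.hom ≫ v

/-! Representables `Y m` with `m ∈ M i` lie in `L_i` as colimits of constant sequences, which
gives both reverse implications. Conversely, a map out of `colim Y(a_j)` vanishes once it vanishes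
on every `Y(a_j)`, and a map from a representable `Y s` into `colim Y(a_j)` factors through some
`Y(a_j)`, because `Y s` is finitely presented: evaluation at `s` commutes with colimits and filtered
colimits of abelian groups are computed on underlying sets. -/

section PreadditiveYoneda

variable {C : Type u} [Category.{v} C] [Preadditive C]

lemma preadditiveYoneda_obj_hom_ext {s : C} {F : Cᵒᵖ ⥤ AddCommGrpCat.{v}}
    {φ ψ : preadditiveYoneda.obj s ⟶ F}
    (h : φ.app (Opposite.op s) (𝟙 s) = ψ.app (Opposite.op s) (𝟙 s)) : φ = ψ := by
  ext X (f : X.unop ⟶ s)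
  have hf : (preadditiveYoneda.obj s).map f.op (𝟙 s) = f := Category.comp_id f
  have hφ := NatTrans.naturality_apply φ f.op (𝟙 s)
  have hψ := NatTrans.naturality_apply ψ f.op (𝟙 s)
  rw [hf] at hφ hψ
  rw [hφ, hψ, h]

lemma exists_preadditiveYoneda_map_comp_colimit_ι {J : Type} [SmallCategory J]
    [IsFiltered J] (G : J ⥤ C) {s : C}
    (φ : preadditiveYoneda.obj s ⟶ colimit (G ⋙ preadditiveYoneda)) :
    ∃ (j : J) (g : s ⟶ G.obj j),
      φ = preadditiveYoneda.map g ≫ colimit.ι (G ⋙ preadditiveYoneda) j := by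
  have : PreservesFilteredColimitsOfSize.{0, 0} (forget AddCommGrpCat.{v}) :=
    preservesSmallestFilteredColimits_of_preservesFilteredColimits _
  obtain ⟨j, g, hg⟩ := Concrete.isColimit_exists_rep _
    (isColimitOfPreserves ((evaluation Cᵒᵖ AddCommGrpCat).obj (Opposite.op s))
      (colimit.isColimit (G ⋙ preadditiveYoneda))) (φ.app (Opposite.op s) (𝟙 s))
  refine ⟨j, g, preadditiveYoneda_obj_hom_ext ?_⟩
  have hg' : (preadditiveYoneda.map g).app (Opposite.op s) (𝟙 s) = g := Category.id_comp g
  rw [← hg]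
  exact congr_arg (ConcreteCategory.hom ((colimit.ι (G ⋙ preadditiveYoneda) j).app _)) hg'.symm

end PreadditiveYoneda

lemma isCauchy_const (μ : GoodMetric S) (m : S) : IsCauchy μ ((Functor.const ℕ).obj m) := by
  refine fun n => ⟨0, fun i j _ h Z g k hT => ?_⟩
  have hZ := Triangle.isZero₃_of_isIso₁ _ hT (inferInstanceAs (IsIso (𝟙 m)))
  exact μ.iso_closed n hZ.isoZero.symm (μ.zero_mem n)

noncomputable def colimYConstIso (m : S) :
    colimY ((Functor.const ℕ).obj m) ≅ preadditiveYoneda.obj m :=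
  HasColimit.isoOfNatIso (Functor.constComp ℕ m preadditiveYoneda) ≪≫
    (colimit.isColimit _).coconePointUniqueUpToIso (isColimitConstCocone ℕ _)

lemma inLsub_preadditiveYoneda_obj (μ : GoodMetric S) {P : Set S} {m : S} (hm : m ∈ P) :
    InLsub μ P (preadditiveYoneda.obj m) :=
  ⟨(Functor.const ℕ).obj m, isCauchy_const μ m, fun _ => hm, ⟨colimYConstIso m⟩⟩

lemma InLsub.hom_eq_zero {μ : GoodMetric S} {P : Set S} {F X : Sᵒᵖ ⥤ AddCommGrpCat.{v}}
    (hF : InLsub μ P F) (hX : ∀ m ∈ P, ∀ φ : preadditiveYoneda.obj m ⟶ X, φ = 0)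
    (φ : F ⟶ X) : φ = 0 := by
  obtain ⟨a, -, ha, ⟨e : colimit (a ⋙ preadditiveYoneda) ≅ F⟩⟩ := hF
  rw [← cancel_epi e.hom, comp_zero]
  exact colimit.hom_ext fun j => by rw [comp_zero]; exact hX _ (ha j) _

lemma InLsub.hom_from_preadditiveYoneda_eq_zero {μ : GoodMetric S} {P : Set S}
    {F : Sᵒᵖ ⥤ AddCommGrpCat.{v}} (hF : InLsub μ P F) {s : S}
    (hs : ∀ m ∈ P, ∀ φ : preadditiveYoneda.obj s ⟶ preadditiveYoneda.obj m, φ = 0)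
    (φ : preadditiveYoneda.obj s ⟶ F) : φ = 0 := by
  obtain ⟨a, -, ha, ⟨e : colimit (a ⋙ preadditiveYoneda) ≅ F⟩⟩ := hF
  rw [← cancel_mono e.inv, zero_comp]
  obtain ⟨j, g, hg⟩ := exists_preadditiveYoneda_map_comp_colimit_ι a (φ ≫ e.inv)
  rw [hg, hs _ (ha j) (preadditiveYoneda.map g), zero_comp]

/-- Lemma 3.2.5: in `Mod-S` we have `Y(M_i)^⊥ = L_i^⊥`, and on
representables `^⊥Y(M_i) ∩ Y(S) = ^⊥L_i ∩ Y(S)`. -/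
theorem statement5 (μ : GoodMetric S) (i : ℕ) :
    (∀ X : Sᵒᵖ ⥤ AddCommGrpCat.{v},
      (∀ m ∈ μ.M i, ∀ φ : preadditiveYoneda.obj m ⟶ X, φ = 0) ↔
      (∀ F : Sᵒᵖ ⥤ AddCommGrpCat.{v}, InLsub μ (μ.M i) F → ∀ φ : F ⟶ X, φ = 0)) ∧
    (∀ s : S,
      (∀ m ∈ μ.M i, ∀ φ : preadditiveYoneda.obj s ⟶ preadditiveYoneda.obj m, φ = 0) ↔
      (∀ F : Sᵒᵖ ⥤ AddCommGrpCat.{v}, InLsub μ (μ.M i) F →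
        ∀ φ : preadditiveYoneda.obj s ⟶ F, φ = 0)) :=
  ⟨fun _ => ⟨fun hX _ hF => hF.hom_eq_zero hX,
      fun h _ hm => h _ (inLsub_preadditiveYoneda_obj μ hm)⟩,
    fun _ => ⟨fun hs _ hF => hF.hom_from_preadditiveYoneda_eq_zero hs,
      fun h _ hm => h _ (inLsub_preadditiveYoneda_obj μ hm)⟩⟩

end Paper
end

section
/- Let S be a triangulated category with a good metric {M_i}. If A → B → C → ΣA is a distinguished triangle in 𝔖(S) and F is any object of L(S), then applying Hom(F, −) yields a long exact sequence of abelian groups. -/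
/-!
For `X = colim Y(a_*)`, the functor `Hom(Y(-), X)` is homological on `S`, being a filtered
colimit of the homological functors `Hom(-, aᵢ)`. If moreover `X ∈ Y(Mₙ)^⊥` and a morphism `m`
has its cone in `Mₙ₊₁`, the long exact sequence makes precomposition with `Y(m)` bijective on
`Hom(-, X)`. Hence, for a Cauchy sequence `d_*` and `N` large, restriction along
`Y(d_N) ⟶ colim Y(d_*)` identifies `Hom(colim Y(d_*), X)` with `Hom(Y(d_N), X)`. Exactness of
`Hom(F, A) ⟶ Hom(F, B) ⟶ Hom(F, C)` is thereby reduced to the representable `Y(d_N)`, where it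
is exactness of the filtered colimit of the exact sequences
`Hom(d_N, aₖ) ⟶ Hom(d_N, bₖ) ⟶ Hom(d_N, cₖ)`.
-/

open CategoryTheory CategoryTheory.Limits CategoryTheory.Pretriangulated ZeroObject

universe v u

namespace Paper

variable (S : Type u) [Category.{v} S] [HasZeroObject S] [HasShift S ℤ]
  [Preadditive S] [∀ n : ℤ, (shiftFunctor S n).Additive] [Pretriangulated S]

variable {S}

section NatColimit

variable {C : Type*} [Category C] {D : ℕ ⥤ C} [HasColimit D] {X : C}

lemma bijective_ι_zero_comp
    (hD : ∀ j, Function.Bijective fun φ : D.obj j ⟶ X =>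
      D.map (homOfLE (Nat.zero_le j)) ≫ φ) :
    Function.Bijective fun χ : colimit D ⟶ X => colimit.ι D 0 ≫ χ := by
  choose L hL using fun j => (hD j).surjective
  have map_comp_L (q : D.obj 0 ⟶ X) {j : ℕ} (f : 0 ⟶ j) : D.map f ≫ L j q = q :=
    hL j q
  constructor
  · intro χ₁ χ₂ h
    refine colimit.hom_ext fun j => (hD j).injective ?_
    simpa only [← Category.assoc, colimit.w] using h
  · intro q
    let c : Cocone D :=
      { pt := X
        ι := { app := fun j => L j q
               naturality := fun i j f => (hD i).injective <| by
                 simp [← Category.assoc, ← Functor.map_comp, map_comp_L] } }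
    exact ⟨colimit.desc D c, by simpa [c] using map_comp_L q (𝟙 0)⟩

/-- Only the tail `j ≥ N` matters, since it is final in `ℕ`. -/
lemma bijective_ι_comp_of_le {N : ℕ} (hD : ∀ j (h : N ≤ j),
      Function.Bijective fun φ : D.obj j ⟶ X => D.map (homOfLE h) ≫ φ) :
    Function.Bijective fun χ : colimit D ⟶ X => colimit.ι D N ≫ χ := by
  let tail : ℕ ⥤ ℕ := (add_right_mono (a := N)).functor
  have : tail.Final := Functor.final_of_exists_of_isFiltered tail
    (fun j => ⟨j, ⟨homOfLE (Nat.le_add_left j N)⟩⟩)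
    (fun {_ _} _ _ => ⟨_, 𝟙 _, Subsingleton.elim _ _⟩)
  have hpre : Function.Bijective fun χ : colimit D ⟶ X => colimit.pre D tail ≫ χ :=
    ⟨fun _ _ h => (cancel_epi _).1 h, fun χ => ⟨inv (colimit.pre D tail) ≫ χ, by simp⟩⟩
  have htail := bijective_ι_zero_comp (D := tail ⋙ D) (X := X)
    (fun j => hD (N + j) (Nat.le_add_right N j))
  have hι : (fun χ : colimit D ⟶ X => colimit.ι D N ≫ χ) =
      (fun χ => colimit.ι (tail ⋙ D) 0 ≫ χ) ∘ (fun χ => colimit.pre D tail ≫ χ) :=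
    funext fun χ => (colimit.ι_pre_assoc D tail 0 χ).symm
  exact hι ▸ htail.comp hpre

end NatColimit

/-- `X ∈ Y(Mₙ)^⊥`. -/
def InPerp (μ : GoodMetric S) (n : ℕ) (X : Sᵒᵖ ⥤ AddCommGrpCat.{v}) : Prop :=
  ∀ m ∈ μ.M n, ∀ φ : preadditiveYoneda.obj m ⟶ X, φ = 0

lemma GoodMetric.antitone_M (μ : GoodMetric S) : Antitone μ.M :=
  antitone_nat_of_succ_le μ.anti

lemma InPerp.mono {μ : GoodMetric S} {n k : ℕ} {X : Sᵒᵖ ⥤ AddCommGrpCat.{v}}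
    (hX : InPerp μ n X) (h : n ≤ k) : InPerp μ k X :=
  fun m hm => hX m (μ.antitone_M h hm)

lemma InPerp.of_iso {μ : GoodMetric S} {n : ℕ} {X X' : Sᵒᵖ ⥤ AddCommGrpCat.{v}}
    (hX : InPerp μ n X) (e : X ≅ X') : InPerp μ n X' := fun m hm φ => by
  simpa using hX m hm (φ ≫ e.inv) =≫ e.hom

section ColimY

open Opposite

variable {C : Type*} [Category.{v} C] [Preadditive C]

lemma yoneda_app_eq {G : Cᵒᵖ ⥤ AddCommGrpCat.{v}} {x : C}
    (φ : preadditiveYoneda.obj x ⟶ G) {w : Cᵒᵖ} (g : unop w ⟶ x) :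
    φ.app w g = G.map g.op (φ.app (op x) (𝟙 x)) :=
  (congrArg (φ.app w) (Category.comp_id g)).symm.trans
    (ConcreteCategory.congr_hom (φ.naturality g.op) (𝟙 x))

lemma yoneda_hom_ext {G : Cᵒᵖ ⥤ AddCommGrpCat.{v}} {x : C}
    {φ ψ : preadditiveYoneda.obj x ⟶ G} (h : φ.app (op x) (𝟙 x) = ψ.app (op x) (𝟙 x)) :
    φ = ψ := by
  ext w g
  rw [yoneda_app_eq φ g, yoneda_app_eq ψ g, h]

lemma yoneda_map_comp_app_id {G : Cᵒᵖ ⥤ AddCommGrpCat.{v}} {x w : C} (p : x ⟶ w)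
    (θ : preadditiveYoneda.obj w ⟶ G) :
    (preadditiveYoneda.map p ≫ θ).app (op x) (𝟙 x) = θ.app (op x) p :=
  congrArg (θ.app (op x)) (Category.id_comp p)

instance inst_s6 : PreservesFilteredColimitsOfSize.{0, 0} (forget AddCommGrpCat.{v}) :=
  preservesFilteredColimitsOfSize_shrink _

noncomputable def colimY.ι (a : ℕ ⥤ C) (j : ℕ) :
    preadditiveYoneda.obj (a.obj j) ⟶ colimY a :=
  colimit.ι (a ⋙ preadditiveYoneda) j

lemma colimY.map_comp_ι (a : ℕ ⥤ C) {i j : ℕ} (h : i ≤ j) :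
    preadditiveYoneda.map (a.map (homOfLE h)) ≫ colimY.ι a j = colimY.ι a i :=
  colimit.w (a ⋙ preadditiveYoneda) (homOfLE h)

lemma colimY.hom_ext {a : ℕ ⥤ C} {X : Cᵒᵖ ⥤ AddCommGrpCat.{v}} {φ ψ : colimY a ⟶ X}
    (h : ∀ j, colimY.ι a j ≫ φ = colimY.ι a j ≫ ψ) : φ = ψ :=
  colimit.hom_ext h

@[simp]
lemma colimY.ι_colimYmap {a b : ℕ ⥤ C} (f : a ⟶ b) (j : ℕ) :
    colimY.ι a j ≫ colimYmap f = preadditiveYoneda.map (f.app j) ≫ colimY.ι b j :=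
  ι_colimMap _ _

lemma exists_eq_yoneda_map_comp_ι (a : ℕ ⥤ C) {x : C}
    (φ : preadditiveYoneda.obj x ⟶ colimY a) :
    ∃ (j : ℕ) (p : x ⟶ a.obj j), φ = preadditiveYoneda.map p ≫ colimY.ι a j := by
  obtain ⟨j, p, hp⟩ := Concrete.isColimit_exists_rep _
    (isColimitOfPreserves ((evaluation Cᵒᵖ AddCommGrpCat.{v}).obj (op x))
      (colimit.isColimit (a ⋙ preadditiveYoneda)))
    (φ.app (op x) (𝟙 x))
  exact ⟨j, p, yoneda_hom_ext ((yoneda_map_comp_app_id p _).trans hp).symm⟩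

lemma exists_comp_map_eq_zero (a : ℕ ⥤ C) {x : C} {j : ℕ} (p : x ⟶ a.obj j)
    (h : preadditiveYoneda.map p ≫ colimY.ι a j = 0) :
    ∃ (k : ℕ) (hk : j ≤ k), p ≫ a.map (homOfLE hk) = 0 := by
  have h0 : (colimY.ι a j).app (op x) p = (colimY.ι a j).app (op x) 0 := by
    rw [map_zero, ← yoneda_map_comp_app_id, h]
    rfl
  obtain ⟨k, f, g, hfg⟩ := Concrete.isColimit_exists_of_rep_eq _
    (isColimitOfPreserves ((evaluation Cᵒᵖ AddCommGrpCat.{v}).obj (op x))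
      (colimit.isColimit (a ⋙ preadditiveYoneda)))
    p 0 h0
  rw [map_zero] at hfg
  exact ⟨k, leOfHom f, hfg⟩

end ColimY

lemma colimY_yoneda_exact₂ (a : ℕ ⥤ S) (T : Triangle S) (hT : T ∈ distTriang S)
    (φ : preadditiveYoneda.obj T.obj₂ ⟶ colimY a)
    (hφ : preadditiveYoneda.map T.mor₁ ≫ φ = 0) :
    ∃ χ : preadditiveYoneda.obj T.obj₃ ⟶ colimY a,
      φ = preadditiveYoneda.map T.mor₂ ≫ χ := by
  obtain ⟨j, p, rfl⟩ := exists_eq_yoneda_map_comp_ι a φ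
  obtain ⟨k, hk, hp⟩ := exists_comp_map_eq_zero a (T.mor₁ ≫ p) (by simpa using hφ)
  obtain ⟨q, hq⟩ := Triangle.yoneda_exact₂ T hT (p ≫ a.map (homOfLE hk)) (by simpa using hp)
  refine ⟨preadditiveYoneda.map q ≫ colimY.ι a k, ?_⟩
  rw [← Functor.map_comp_assoc, ← hq, Functor.map_comp_assoc, colimY.map_comp_ι]

lemma bijective_yoneda_map_comp_of_coneIn {μ : GoodMetric S} {n : ℕ} {a : ℕ ⥤ S}
    (ha : InPerp μ n (colimY a)) {x y : S} {m : x ⟶ y} (hm : coneIn S (μ.M (n + 1)) m) :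
    Function.Bijective fun φ : preadditiveYoneda.obj y ⟶ colimY a =>
      preadditiveYoneda.map m ≫ φ := by
  obtain ⟨z, g, h, hT⟩ := distinguished_cocone_triangle m
  have hz : z ∈ μ.M (n + 1) := hm z g h hT
  constructor
  · intro φ₁ φ₂ e
    obtain ⟨χ, hχ⟩ := colimY_yoneda_exact₂ a _ hT (φ₁ - φ₂)
      (show preadditiveYoneda.map m ≫ (φ₁ - φ₂) = 0 by
        rw [Preadditive.comp_sub, sub_eq_zero]; exact e)
    obtain rfl : χ = 0 := ha z (μ.anti n hz) χ
    simp only [comp_zero] at hχ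
    exact sub_eq_zero.1 hχ
  · intro ψ
    obtain ⟨χ, hχ⟩ := colimY_yoneda_exact₂ a _ (inv_rot_of_distTriang _ hT) ψ
      (ha _ (μ.shiftNeg_mem n hz) _)
    exact ⟨χ, hχ.symm⟩

lemma bijective_ι_comp_of_coneIn {μ : GoodMetric S} {n : ℕ} {a d : ℕ ⥤ S}
    (ha : InPerp μ n (colimY a)) {N : ℕ}
    (hd : ∀ j (h : N ≤ j), coneIn S (μ.M (n + 1)) (d.map (homOfLE h))) :
    Function.Bijective fun χ : colimY d ⟶ colimY a => colimY.ι d N ≫ χ :=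
  bijective_ι_comp_of_le fun j h => bijective_yoneda_map_comp_of_coneIn ha (hd j h)

namespace TriCompletion

variable {a b : ℕ ⥤ S} {f : a ⟶ b} (T : TriCompletion f)

lemma colimYmap_comp_colimYmap_g : colimYmap f ≫ colimYmap T.g = 0 := by
  refine colimY.hom_ext fun i => ?_
  have hfg : f.app i ≫ T.g.app i = 0 := comp_distTriang_mor_zero₁₂ _ (T.dist i)
  rw [← Category.assoc, colimY.ι_colimYmap, Category.assoc, colimY.ι_colimYmap,
    ← Category.assoc, ← Functor.map_comp, hfg,
    Functor.map_zero, zero_comp, comp_zero]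

lemma exists_yoneda_lift {x : S} (φ : preadditiveYoneda.obj x ⟶ colimY b)
    (hφ : φ ≫ colimYmap T.g = 0) :
    ∃ χ : preadditiveYoneda.obj x ⟶ colimY a, χ ≫ colimYmap f = φ := by
  obtain ⟨j, p, rfl⟩ := exists_eq_yoneda_map_comp_ι b φ
  obtain ⟨k, hk, hp⟩ := exists_comp_map_eq_zero T.c (p ≫ T.g.app j) (by simpa using hφ)
  obtain ⟨q, hq⟩ : ∃ q : x ⟶ a.obj k, p ≫ b.map (homOfLE hk) = q ≫ f.app k :=
    Triangle.coyoneda_exact₂ _ (T.dist k) _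
      (show (p ≫ b.map (homOfLE hk)) ≫ T.g.app k = 0 by
        rw [Category.assoc, T.g.naturality, ← Category.assoc, hp])
  refine ⟨preadditiveYoneda.map q ≫ colimY.ι a k, ?_⟩
  rw [Category.assoc, colimY.ι_colimYmap, ← Functor.map_comp_assoc, ← hq,
    Functor.map_comp_assoc, colimY.map_comp_ι]

lemma exists_lift_of_isCauchy {μ : GoodMetric S} {n : ℕ} (ha : InPerp μ n (colimY a))
    (hb : InPerp μ n (colimY b)) {d : ℕ ⥤ S} (hd : IsCauchy μ d) (ψ : colimY d ⟶ colimY b)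
    (hψ : ψ ≫ colimYmap T.g = 0) : ∃ φ : colimY d ⟶ colimY a, φ ≫ colimYmap f = ψ := by
  obtain ⟨N, hN⟩ := hd (n + 1)
  obtain ⟨χ, hχ⟩ := T.exists_yoneda_lift (colimY.ι d N ≫ ψ)
    (by rw [Category.assoc, hψ, comp_zero])
  obtain ⟨φ, hφ⟩ := (bijective_ι_comp_of_coneIn ha (hN N · le_rfl)).surjective χ
  refine ⟨φ, (bijective_ι_comp_of_coneIn hb (hN N · le_rfl)).injective ?_⟩
  simp only [← Category.assoc, hφ, hχ]

end TriCompletion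

theorem statement6_general (μ : GoodMetric S) {A B C : Sᵒᵖ ⥤ AddCommGrpCat.{v}}
    (u : A ⟶ B) (v : B ⟶ C) (hT : StrongTriangleOn μ A B C u v)
    (hA : InFrak μ A) (hB : InFrak μ B)
    (F : Sᵒᵖ ⥤ AddCommGrpCat.{v}) (hF : InL μ F) :
    (∀ φ : F ⟶ A, φ ≫ u ≫ v = 0) ∧
    (∀ ψ : F ⟶ B, ψ ≫ v = 0 → ∃ φ : F ⟶ A, φ ≫ u = ψ) := by
  obtain ⟨T, eA, eB, eC, hu, hv⟩ := hT
  obtain ⟨nA, hnA⟩ : ∃ n, InPerp μ n A := hA.2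
  obtain ⟨nB, hnB⟩ : ∃ n, InPerp μ n B := hB.2
  obtain rfl : u = eA.inv ≫ colimYmap T.f ≫ eB.hom := by rw [hu, Iso.inv_hom_id_assoc]
  obtain rfl : v = eB.inv ≫ colimYmap T.comp.g ≫ eC.hom := by rw [hv, Iso.inv_hom_id_assoc]
  have huv := T.comp.colimYmap_comp_colimYmap_g
  refine ⟨fun φ => by simp [reassoc_of% huv], fun ψ hψ => ?_⟩
  obtain ⟨d, hd, ⟨eF⟩⟩ := hF
  have ha := (hnA.of_iso eA.symm).mono (le_max_left nA nB)
  have hb := (hnB.of_iso eB.symm).mono (le_max_right nA nB)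
  obtain ⟨φ, hφ⟩ := T.comp.exists_lift_of_isCauchy ha hb hd (eF.hom ≫ ψ ≫ eB.inv)
    (by simpa using hψ =≫ eC.inv)
  exact ⟨eF.inv ≫ φ ≫ eA.hom, by simp [reassoc_of% hφ]⟩

/-- Lemma 3.305: if `A ⟶ B ⟶ C` underlies a distinguished triangle of
`𝔖(S)` (i.e. a strong triangle with all three objects in `𝔖(S)`) and `F ∈ L(S)`, then
`Hom(F, −)` yields a long exact sequence; equivalently (by rotation) the sequence
`Hom(F,A) ⟶ Hom(F,B) ⟶ Hom(F,C)` is exact. -/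
theorem statement6 (μ : GoodMetric S) {A B C : Sᵒᵖ ⥤ AddCommGrpCat.{v}}
    (u : A ⟶ B) (v : B ⟶ C) (hT : StrongTriangleOn μ A B C u v)
    (hA : InFrak μ A) (hB : InFrak μ B) (hC : InFrak μ C)
    (F : Sᵒᵖ ⥤ AddCommGrpCat.{v}) (hF : InL μ F) :
    (∀ φ : F ⟶ A, φ ≫ u ≫ v = 0) ∧
    (∀ ψ : F ⟶ B, ψ ≫ v = 0 → ∃ φ : F ⟶ A, φ ≫ u = ψ) :=
  statement6_general μ u v hT hA hB F hF

end Paper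
end

section
/- Let T be a triangulated category with countable coproducts and a nondegenerate t-structure such that countable coproducts of objects of T^{≥0} lie in T^{≥ -r} for some fixed r > 0. Then for any object Y ∈ T, the natural map hocolim Y^{≤(*)} → Y, induced from the truncation maps Y^{≤ i} → Y, is an isomorphism (after possibly correcting by an automorphism); in particular Y is isomorphic to the homotopy colimit of its truncation sequence Y^{≤1} → Y^{≤2} → Y^{≤3} → ⋯. -/
/-!
The truncation maps form a cocone on `Y^{≤(*)}`, so the defining triangle of the homotopy colimit
yields `ψ : X ⟶ Y` compatible with them. If `Hom(D, ψ)` is bijective for every `D` in every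
`T^{≤m}`, the cone of `ψ` receives no nonzero map from any `T^{≤m}`, hence lies in every `T^{≥n}`
and vanishes by nondegeneracy. Surjectivity holds because a map `D ⟶ Y` with `D ∈ T^{≤m}` factors
through some `Y^{≤i}`.

Injectivity reduces to the exactness of `0 ⟶ Hom(D, ∐ Y^{≤i}) ⟶ Hom(D, ∐ Y^{≤i}) ⟶ Hom(D, Y)`,
the maps being `1 - shift` and the truncation maps. As `1 - shift^N = (∑_{j<N} shift^j)(1 - shift)`,
the sequence may be replaced by its tail `Y^{≤N+1} ⟶ Y^{≤N+2} ⟶ ⋯`, and the tail by the constant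
sequence on `Y^{≤N}`, for which `1 - shift` is split injective with cokernel the fold map. The
cone of `∐ Y^{≤N} ⟶ ∐ Y^{≤N+i+1}` is the coproduct of the cones of `Y^{≤N} ⟶ Y^{≤N+i+1}`, which
lie in `T^{≥N+1}`; so it lies in `T^{≥N+1-r}`, and for `N > m + r` it does not affect `Hom(D, -)`.
-/

open CategoryTheory CategoryTheory.Limits CategoryTheory.Pretriangulated ZeroObject

universe v u v₂ u₂

namespace Paper

variable (T : Type u) [Category.{v} T] [HasZeroObject T] [HasShift T ℤ]
  [Preadditive T] [∀ n : ℤ, (shiftFunctor T n).Additive] [Pretriangulated T]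

/-- A t-structure on the triangulated category `T`, packaged together with a choice of
truncation functors and of the natural maps between them. -/
structure TData : Type (max u v) where
  le : ℤ → Set T
  ge : ℤ → Set T
  le_iso : ∀ n ⦃X Y : T⦄, (X ≅ Y) → X ∈ le n → Y ∈ le n
  ge_iso : ∀ n ⦃X Y : T⦄, (X ≅ Y) → X ∈ ge n → Y ∈ ge n
  le_mono : ∀ ⦃n m : ℤ⦄, n ≤ m → le n ⊆ le m
  ge_anti : ∀ ⦃n m : ℤ⦄, n ≤ m → ge m ⊆ ge n
  le_shift : ∀ (n : ℤ) ⦃X : T⦄, X ∈ le n → X⟦(1 : ℤ)⟧ ∈ le (n - 1)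
  ge_shift : ∀ (n : ℤ) ⦃X : T⦄, X ∈ ge n → X⟦(1 : ℤ)⟧ ∈ ge (n - 1)
  hom_zero : ∀ ⦃n m : ℤ⦄, n < m → ∀ ⦃X Y : T⦄, X ∈ le n → Y ∈ ge m →
    ∀ f : X ⟶ Y, f = 0
  truncLE : ℤ → T ⥤ T
  truncGE : ℤ → T ⥤ T
  truncLEπ : ∀ n, truncLE n ⟶ 𝟭 T
  truncGEι : ∀ n, 𝟭 T ⟶ truncGE n
  truncLE_mem : ∀ n X, (truncLE n).obj X ∈ le n
  truncGE_mem : ∀ n X, (truncGE n).obj X ∈ ge n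
  trunc_triangle : ∀ (n : ℤ) (X : T), ∃ h,
    Triangle.mk ((truncLEπ n).app X) ((truncGEι (n + 1)).app X) h ∈ distTriang T
  truncLEle : ∀ ⦃n m : ℤ⦄, n ≤ m → (truncLE n ⟶ truncLE m)
  truncLEle_refl : ∀ n : ℤ, truncLEle (le_refl n) = 𝟙 (truncLE n)
  truncLEle_trans : ∀ ⦃n m k : ℤ⦄ (h₁ : n ≤ m) (h₂ : m ≤ k),
    truncLEle h₁ ≫ truncLEle h₂ = truncLEle (h₁.trans h₂)
  truncLEle_π : ∀ ⦃n m : ℤ⦄ (h : n ≤ m), truncLEle h ≫ truncLEπ m = truncLEπ n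

variable [HasColimitsOfShape (Discrete ℕ) T]

/-- The "shift by one" endomorphism of `⊕ᵢ Aᵢ` for a sequence `A`, whose components are
`Aᵢ ⟶ A_{i+1} ⟶ ⊕ᵢ Aᵢ`. -/
noncomputable def seqShift (A : ℕ ⥤ T) : (∐ fun i => A.obj i) ⟶ ∐ fun i => A.obj i :=
  Sigma.desc fun i => A.map (homOfLE (Nat.le_succ i)) ≫ Sigma.ι (fun i => A.obj i) (i + 1)

/-- `π : ⊕ᵢ Aᵢ ⟶ X` exhibits `X` as the homotopy colimit of the sequence `A`: the map
`1 − shift` followed by `π` extends to a distinguished triangle. -/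
def IsHocolim (A : ℕ ⥤ T) (X : T) (π : (∐ fun i => A.obj i) ⟶ X) : Prop :=
  ∃ w, Triangle.mk (𝟙 (∐ fun i => A.obj i) - seqShift T A) π w ∈ distTriang T

/-- The truncation sequence `Y^{≤1} ⟶ Y^{≤2} ⟶ ⋯` of an object `Y`. -/
def truncSeq (t : TData T) (Y : T) : ℕ ⥤ T where
  obj i := (t.truncLE ((i : ℤ) + 1)).obj Y
  map {i j} f :=
    (t.truncLEle (show ((i : ℤ) + 1) ≤ (j : ℤ) + 1 by have := leOfHom f; omega)).app Y
  map_id i := by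
    show (t.truncLEle (le_refl ((i : ℤ) + 1))).app Y = 𝟙 _
    rw [t.truncLEle_refl]
    rfl
  map_comp {i j k} f g := by
    show _ = (t.truncLEle _ ≫ t.truncLEle _).app Y
    rw [t.truncLEle_trans]

section TStructure

variable {C : Type*} [Category C] [HasZeroObject C] [HasShift C ℤ] [Preadditive C]
  [∀ n : ℤ, (shiftFunctor C n).Additive] [Pretriangulated C] (t : TData C)

namespace TData

lemma shift_neg_one_hom_eq_zero {c c' : ℤ} (h : c ≤ c') {D Z : C} (hD : D ∈ t.le c)
    (hZ : Z ∈ t.ge c') (φ : D ⟶ Z⟦(-1 : ℤ)⟧) : φ = 0 := by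
  apply (shiftFunctor C (1 : ℤ)).map_injective
  rw [Functor.map_zero,
    ← cancel_mono ((shiftFunctorCompIsoId C (-1 : ℤ) 1 (by omega)).hom.app Z), zero_comp]
  exact t.hom_zero (by omega) (t.le_shift c hD) hZ _

section DistTriang

variable {t} {P Q Z : C} {f : P ⟶ Q} {g : Q ⟶ Z} {δ : Z ⟶ P⟦(1 : ℤ)⟧}
  (hT : Triangle.mk f g δ ∈ distTriang C) {c m : ℤ} (hZ : Z ∈ t.ge c) {D : C}
  (hD : D ∈ t.le m)
include hT hZ hD

lemma exists_eq_comp_of_distTriang (h : m < c) (x : D ⟶ Q) : ∃ y : D ⟶ P, x = y ≫ f :=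
  Triangle.coyoneda_exact₂ _ hT x (t.hom_zero h hD hZ _)

lemma eq_zero_of_distTriang (h : m ≤ c) {y : D ⟶ P} (hy : y ≫ f = 0) : y = 0 := by
  obtain ⟨η, rfl⟩ := Triangle.coyoneda_exact₂ _ (inv_rot_of_distTriang _ hT) y hy
  rw [t.shift_neg_one_hom_eq_zero h hD hZ η]
  exact zero_comp

lemma eq_zero_of_distTriang_shift (h : m < c) {y : D ⟶ P⟦(1 : ℤ)⟧}
    (hy : y ≫ f⟦(1 : ℤ)⟧' = 0) : y = 0 := by
  obtain ⟨η, rfl⟩ := Triangle.coyoneda_exact₁ _ hT y hy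
  rw [t.hom_zero h hD hZ η]
  exact zero_comp

end DistTriang

lemma mem_ge_of_forall_hom_eq_zero {a : ℤ} {E : C}
    (h : ∀ D ∈ t.le a, ∀ φ : D ⟶ E, φ = 0) : E ∈ t.ge (a + 1) := by
  obtain ⟨δ, hT⟩ := t.trunc_triangle a E
  have hzero : IsZero ((t.truncLE a).obj E) := by
    rw [IsZero.iff_id_eq_zero]
    exact eq_zero_of_distTriang hT (t.truncGE_mem _ E) (t.truncLE_mem a E) (by omega)
      (by rw [Category.id_comp]; exact h _ (t.truncLE_mem a E) _)
  have : IsIso ((t.truncGEι (a + 1)).app E) := (Triangle.isZero₁_iff_isIso₂ _ hT).mp hzero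
  exact t.ge_iso _ (asIso ((t.truncGEι (a + 1)).app E)).symm (t.truncGE_mem _ E)

lemma mem_le_of_forall_hom_eq_zero {a : ℤ} {E : C}
    (h : ∀ Z ∈ t.ge (a + 1), ∀ φ : E ⟶ Z, φ = 0) : E ∈ t.le a := by
  obtain ⟨δ, hT⟩ := t.trunc_triangle a E
  have hzero : IsZero ((t.truncGE (a + 1)).obj E) := by
    rw [IsZero.iff_id_eq_zero]
    obtain ⟨η, hη⟩ : ∃ η : ((t.truncLE a).obj E)⟦(1 : ℤ)⟧ ⟶ (t.truncGE (a + 1)).obj E,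
        𝟙 _ = δ ≫ η :=
      Triangle.yoneda_exact₃ _ hT _ ((Category.comp_id _).trans (h _ (t.truncGE_mem _ E) _))
    rw [hη, t.hom_zero (by omega) (t.le_shift a (t.truncLE_mem a E)) (t.truncGE_mem _ E) η]
    exact comp_zero
  have : IsIso ((t.truncLEπ a).app E) := (Triangle.isZero₃_iff_isIso₁ _ hT).mp hzero
  exact t.le_iso _ (asIso ((t.truncLEπ a).app E)) (t.truncLE_mem a E)

lemma shift_neg_one_mem_ge {c : ℤ} {Z : C} (hZ : Z ∈ t.ge c) : Z⟦(-1 : ℤ)⟧ ∈ t.ge (c + 1) :=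
  t.mem_ge_of_forall_hom_eq_zero fun _ hD _ => t.shift_neg_one_hom_eq_zero le_rfl hD hZ _

lemma shift_neg_one_mem_le {c : ℤ} {D : C} (hD : D ∈ t.le c) : D⟦(-1 : ℤ)⟧ ∈ t.le (c + 1) := by
  refine t.mem_le_of_forall_hom_eq_zero fun Z hZ φ => ?_
  apply (shiftFunctor C (1 : ℤ)).map_injective
  rw [Functor.map_zero,
    ← cancel_epi ((shiftFunctorCompIsoId C (-1 : ℤ) 1 (by omega)).inv.app D), comp_zero]
  exact t.hom_zero (by omega) hD (t.ge_shift _ hZ) _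

lemma truncLEle_app_comp_truncLEπ_app {a b : ℤ} (h : a ≤ b) (Y : C) :
    (t.truncLEle h).app Y ≫ (t.truncLEπ b).app Y = (t.truncLEπ a).app Y := by
  rw [← NatTrans.comp_app, t.truncLEle_π]

lemma truncLEle_app_comp_truncLEle_app {a b c : ℤ} (h₁ : a ≤ b) (h₂ : b ≤ c) (Y : C) :
    (t.truncLEle h₁).app Y ≫ (t.truncLEle h₂).app Y = (t.truncLEle (h₁.trans h₂)).app Y := by
  rw [← NatTrans.comp_app, t.truncLEle_trans]

lemma mem_ge_of_distTriang_truncLEle {a b : ℤ} (hab : a ≤ b) {Y E : C}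
    {g : (t.truncLE b).obj Y ⟶ E} {e : E ⟶ ((t.truncLE a).obj Y)⟦(1 : ℤ)⟧}
    (hT : Triangle.mk ((t.truncLEle hab).app Y) g e ∈ distTriang C) : E ∈ t.ge (a + 1) := by
  refine t.mem_ge_of_forall_hom_eq_zero fun D hD φ => ?_
  obtain ⟨δa, hTa⟩ := t.trunc_triangle a Y
  obtain ⟨δb, hTb⟩ := t.trunc_triangle b Y
  have he : e ≫ ((t.truncLEle hab).app Y)⟦(1 : ℤ)⟧' = 0 := comp_distTriang_mor_zero₃₁ _ hT
  have hg : (t.truncLEle hab).app Y ≫ g = 0 := comp_distTriang_mor_zero₁₂ _ hT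
  have hφe : φ ≫ e = 0 := by
    refine eq_zero_of_distTriang_shift hTa (t.truncGE_mem _ Y) hD (by omega) ?_
    rw [← t.truncLEle_app_comp_truncLEπ_app hab, Functor.map_comp, Category.assoc,
      reassoc_of% he, zero_comp, comp_zero]
  obtain ⟨ξ, rfl⟩ : ∃ ξ : D ⟶ (t.truncLE b).obj Y, φ = ξ ≫ g :=
    Triangle.coyoneda_exact₂ _ (rot_of_distTriang _ hT) φ hφe
  obtain ⟨ξ', hξ'⟩ := exists_eq_comp_of_distTriang hTa (t.truncGE_mem _ Y) hD (by omega)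
    (ξ ≫ (t.truncLEπ b).app Y)
  have hξ : ξ = ξ' ≫ (t.truncLEle hab).app Y := by
    rw [← sub_eq_zero]
    refine eq_zero_of_distTriang hTb (t.truncGE_mem _ Y) hD (by omega) ?_
    rw [Preadditive.sub_comp, hξ', Category.assoc, t.truncLEle_app_comp_truncLEπ_app, sub_self]
  rw [hξ, Category.assoc, hg, comp_zero]

end TData

end TStructure

section Coproducts

variable {C : Type*} [Category C] [HasZeroObject C] [HasShift C ℤ] [Preadditive C]
  [∀ n : ℤ, (shiftFunctor C n).Additive] [Pretriangulated C] {J : Type*} (Tr : J → Triangle C)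
  [HasCoproduct fun j => (Tr j).obj₁] [HasCoproduct fun j => (Tr j).obj₂]
  [HasCoproduct fun j => (Tr j).obj₃]

noncomputable def coproductTriangle : Triangle C :=
  Triangle.mk (Limits.Sigma.map fun j => (Tr j).mor₁) (Limits.Sigma.map fun j => (Tr j).mor₂)
    (Sigma.desc fun j => (Tr j).mor₃ ≫ (Sigma.ι (fun j => (Tr j).obj₁) j)⟦(1 : ℤ)⟧')

variable {Tr} (hT : ∀ j, Tr j ∈ distTriang C)

section ComparisonWithCone

variable {Z : C} {g : (∐ fun j => (Tr j).obj₂) ⟶ Z} {h : Z ⟶ (∐ fun j => (Tr j).obj₁)⟦(1 : ℤ)⟧}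
  (hT' : Triangle.mk (Limits.Sigma.map fun j => (Tr j).mor₁) g h ∈ distTriang C)
  {c : ∀ j, (Tr j).obj₃ ⟶ Z}
  (hc₂ : ∀ j, (Tr j).mor₂ ≫ c j = Sigma.ι (fun j => (Tr j).obj₂) j ≫ g)
  (hc₃ : ∀ j, (Tr j).mor₃ ≫ (Sigma.ι (fun j => (Tr j).obj₁) j)⟦(1 : ℤ)⟧' = c j ≫ h)
include hT hT' hc₂ hc₃

lemma eq_zero_of_sigmaDesc_comp_eq_zero {W : C} {β : Z ⟶ W} (hβ : Sigma.desc c ≫ β = 0) :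
    β = 0 := by
  have hcβ : ∀ j, c j ≫ β = 0 := fun j => by
    rw [← Sigma.ι_desc c j, Category.assoc, hβ, comp_zero]
  have hgβ : g ≫ β = 0 := Sigma.hom_ext _ _ fun j => by
    rw [comp_zero, ← reassoc_of% hc₂ j, hcβ j, comp_zero]
  obtain ⟨ξ, rfl⟩ : ∃ ξ : (∐ fun j => (Tr j).obj₁)⟦(1 : ℤ)⟧ ⟶ W, β = h ≫ ξ :=
    Triangle.yoneda_exact₃ _ hT' β hgβ
  have hζ : ∀ j, ∃ ζ : (Tr j).obj₂⟦(1 : ℤ)⟧ ⟶ W,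
      (Sigma.ι (fun j => (Tr j).obj₁) j)⟦(1 : ℤ)⟧' ≫ ξ = (Tr j).mor₁⟦(1 : ℤ)⟧' ≫ ζ := fun j => by
    obtain ⟨ζ, hζ⟩ : ∃ ζ : (Tr j).obj₂⟦(1 : ℤ)⟧ ⟶ W,
        (Sigma.ι (fun j => (Tr j).obj₁) j)⟦(1 : ℤ)⟧' ≫ ξ = (-(Tr j).mor₁⟦(1 : ℤ)⟧') ≫ ζ :=
      Triangle.yoneda_exact₂ _ (rot_of_distTriang _ (rot_of_distTriang _ (hT j))) _
        (show (Tr j).mor₃ ≫ _ = 0 by rw [reassoc_of% hc₃ j, hcβ j])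
    exact ⟨-ζ, by rw [hζ, Preadditive.neg_comp, Preadditive.comp_neg]⟩
  choose ζ hζ using hζ
  have hι₁ := isColimitOfHasCoproductOfPreservesColimit (shiftFunctor C (1 : ℤ))
    (fun j => (Tr j).obj₁)
  have hι₂ := isColimitOfHasCoproductOfPreservesColimit (shiftFunctor C (1 : ℤ))
    (fun j => (Tr j).obj₂)
  have hξ : ξ = (Limits.Sigma.map fun j => (Tr j).mor₁)⟦(1 : ℤ)⟧' ≫
      Cofan.IsColimit.desc hι₂ ζ :=
    Cofan.IsColimit.hom_ext hι₁ _ _ fun j => by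
      rw [Cofan.inj, Cofan.mk_ι_app, hζ j, ← Functor.map_comp_assoc, Sigma.ι_map,
        Functor.map_comp, Category.assoc]
      exact congrArg (_ ≫ ·) (Cofan.IsColimit.fac hι₂ ζ j).symm
  have hhf : h ≫ (Limits.Sigma.map fun j => (Tr j).mor₁)⟦(1 : ℤ)⟧' = 0 :=
    comp_distTriang_mor_zero₃₁ _ hT'
  rw [hξ, reassoc_of% hhf, zero_comp]

lemma exists_sigmaDesc_comp_eq {W : C} (α : (∐ fun j => (Tr j).obj₃) ⟶ W) :
    ∃ β, Sigma.desc c ≫ β = α := by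
  have hf₁₂ : (Limits.Sigma.map fun j => (Tr j).mor₁) ≫
      (Limits.Sigma.map fun j => (Tr j).mor₂) ≫ α = 0 := Sigma.hom_ext _ _ fun j => by
    simp only [Sigma.ι_map_assoc, comp_zero, reassoc_of% (comp_distTriang_mor_zero₁₂ _ (hT j)),
      zero_comp]
  obtain ⟨β, hβ⟩ : ∃ β : Z ⟶ W, (Limits.Sigma.map fun j => (Tr j).mor₂) ≫ α = g ≫ β :=
    Triangle.yoneda_exact₂ _ hT' _ hf₁₂
  have hε : ∀ j, ∃ ε : (Tr j).obj₁⟦(1 : ℤ)⟧ ⟶ W,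
      c j ≫ β - Sigma.ι (fun j => (Tr j).obj₃) j ≫ α = (Tr j).mor₃ ≫ ε := fun j =>
    Triangle.yoneda_exact₃ _ (hT j) _ (by
      rw [Preadditive.comp_sub, reassoc_of% hc₂ j, ← hβ, Sigma.ι_map_assoc, sub_self])
  choose ε hε using hε
  have hι₁ := isColimitOfHasCoproductOfPreservesColimit (shiftFunctor C (1 : ℤ))
    (fun j => (Tr j).obj₁)
  refine ⟨β - h ≫ Cofan.IsColimit.desc hι₁ ε, Sigma.hom_ext _ _ fun j => ?_⟩
  rw [Sigma.ι_desc_assoc, Preadditive.comp_sub, ← reassoc_of% hc₃ j,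
    show (Sigma.ι (fun j => (Tr j).obj₁) j)⟦(1 : ℤ)⟧' ≫ Cofan.IsColimit.desc hι₁ ε = ε j from
      Cofan.IsColimit.fac hι₁ ε j, ← hε, sub_sub_cancel]

lemma isIso_sigmaDesc_of_distTriang : IsIso (Sigma.desc c) :=
  isIso_of_coyoneda_map_bijective _ fun _ =>
    ⟨fun β β' hββ' => sub_eq_zero.mp (eq_zero_of_sigmaDesc_comp_eq_zero hT hT' hc₂ hc₃
      (by rw [Preadditive.comp_sub, sub_eq_zero]; exact hββ')),
    fun α => exists_sigmaDesc_comp_eq hT hT' hc₂ hc₃ α⟩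

end ComparisonWithCone

include hT

lemma coproductTriangle_distinguished : coproductTriangle Tr ∈ distTriang C := by
  obtain ⟨Z, g, h, hT'⟩ := distinguished_cocone_triangle (Limits.Sigma.map fun j => (Tr j).mor₁)
  have hc : ∀ j, ∃ c : (Tr j).obj₃ ⟶ Z,
      (Tr j).mor₂ ≫ c = Sigma.ι (fun j => (Tr j).obj₂) j ≫ g ∧
        (Tr j).mor₃ ≫ (Sigma.ι (fun j => (Tr j).obj₁) j)⟦(1 : ℤ)⟧' = c ≫ h := fun j =>
    complete_distinguished_triangle_morphism _ _ (hT j) hT' _ _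
      (Sigma.ι_map (fun j => (Tr j).mor₁) j).symm
  choose c hc₂ hc₃ using hc
  have := isIso_sigmaDesc_of_distTriang hT hT' hc₂ hc₃
  have comm₂ : (Limits.Sigma.map fun j => (Tr j).mor₂) ≫ Sigma.desc c = g :=
    Sigma.hom_ext _ _ fun j => by rw [Sigma.ι_map_assoc, Sigma.ι_desc, hc₂]
  have comm₃ : Sigma.desc (fun j => (Tr j).mor₃ ≫ (Sigma.ι (fun j => (Tr j).obj₁) j)⟦(1 : ℤ)⟧') =
      Sigma.desc c ≫ h :=
    Sigma.hom_ext _ _ fun j => by rw [Sigma.ι_desc, Sigma.ι_desc_assoc, hc₃]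
  refine isomorphic_distinguished _ hT' _ (Triangle.isoMk _ _ (Iso.refl _) (Iso.refl _)
    (asIso (Sigma.desc c) : (∐ fun j => (Tr j).obj₃) ≅ Z) ?_ ?_ ?_)
  · exact (Category.comp_id _).trans (Category.id_comp _).symm
  · exact comm₂.trans (Category.id_comp g).symm
  · exact (congrArg (_ ≫ ·) ((shiftFunctor C (1 : ℤ)).map_id _)).trans
      ((Category.comp_id _).trans comm₃)

end Coproducts

section Sequences

variable {C : Type*} [Category C] [HasColimitsOfShape (Discrete ℕ) C]

lemma ι_seqShift (A : ℕ ⥤ C) (i : ℕ) :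
    Sigma.ι (fun j => A.obj j) i ≫ seqShift C A =
      A.map (homOfLE (Nat.le_succ i)) ≫ Sigma.ι (fun j => A.obj j) (i + 1) :=
  Sigma.ι_desc _ _

lemma ι_seqShift_pow (A : ℕ ⥤ C) (N i : ℕ) :
    Sigma.ι (fun j => A.obj j) i ≫ (End.of (seqShift C A) ^ N) =
      A.map (homOfLE (Nat.le_add_right i N)) ≫ Sigma.ι (fun j => A.obj j) (i + N) := by
  induction N with
  | zero => simp
  | succ N ih =>
    rw [pow_succ', End.mul_def, reassoc_of% ih, ι_seqShift, ← A.map_comp_assoc]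
    rfl

lemma comp_seqShift_pow_of_comp_seqShift {A : ℕ ⥤ C} {D : C} {x : D ⟶ ∐ fun i => A.obj i}
    (hx : x ≫ seqShift C A = x) (N : ℕ) : x ≫ End.of (seqShift C A) ^ N = x := by
  induction N with
  | zero => exact Category.comp_id x
  | succ N ih => rw [pow_succ, End.mul_def, ← Category.assoc, hx, ih]

lemma map_comp_ι_eq {A : ℕ ⥤ C} {i j k : ℕ} (hj : i ≤ j) (hk : i ≤ k) (h : j = k) :
    A.map (homOfLE hj) ≫ Sigma.ι (fun n => A.obj n) j =
      A.map (homOfLE hk) ≫ Sigma.ι (fun n => A.obj n) k := by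
  subst h
  rfl

noncomputable def sigmaDesc {A : ℕ ⥤ C} (c : Cocone A) : (∐ fun i => A.obj i) ⟶ c.pt :=
  Sigma.desc c.ι.app

@[simp]
lemma ι_sigmaDesc {A : ℕ ⥤ C} (c : Cocone A) (i : ℕ) :
    Sigma.ι (fun j => A.obj j) i ≫ sigmaDesc c = c.ι.app i :=
  Sigma.ι_desc _ _

lemma seqShift_comp_sigmaDesc {A : ℕ ⥤ C} (c : Cocone A) :
    seqShift C A ≫ sigmaDesc c = sigmaDesc c :=
  Sigma.hom_ext _ _ fun i => by rw [reassoc_of% ι_seqShift, ι_sigmaDesc, ι_sigmaDesc, c.w]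

lemma sigmaMap_comp_seqShift {A B : ℕ ⥤ C} (α : A ⟶ B) :
    Limits.Sigma.map α.app ≫ seqShift C B = seqShift C A ≫ Limits.Sigma.map α.app :=
  Sigma.hom_ext _ _ fun i => by simp [ι_seqShift, reassoc_of% ι_seqShift]

lemma sigmaMap_comp_sigmaDesc {A B : ℕ ⥤ C} (α : A ⟶ B) (c : Cocone B) :
    Limits.Sigma.map α.app ≫ sigmaDesc c = sigmaDesc ((Cocone.precompose α).obj c) :=
  Sigma.hom_ext _ _ fun i => by simp

abbrev constSeq (K : C) : ℕ ⥤ C where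
  obj _ := K
  map _ := 𝟙 K

abbrev seqTail (A : ℕ ⥤ C) (N : ℕ) : ℕ ⥤ C where
  obj i := A.obj (i + N)
  map f := A.map (homOfLE (Nat.add_le_add_right (leOfHom f) N))
  map_id _ := A.map_id _
  map_comp _ _ := by rw [← A.map_comp]; rfl

abbrev seqTailCocone {A : ℕ ⥤ C} (c : Cocone A) (N : ℕ) : Cocone (seqTail A N) where
  pt := c.pt
  ι.app i := c.ι.app (i + N)
  ι.naturality _ _ _ := by
    dsimp
    rw [c.w, Category.comp_id]

def toSeqTail (A : ℕ ⥤ C) (N : ℕ) : A ⟶ seqTail A N where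
  app i := A.map (homOfLE (Nat.le_add_right i N))
  naturality _ _ _ := by
    simp only [seqTail, ← A.map_comp]
    rfl

noncomputable def seqTailIncl (A : ℕ ⥤ C) (N : ℕ) :
    (∐ fun i => (seqTail A N).obj i) ⟶ ∐ fun i => A.obj i :=
  Sigma.desc fun i => Sigma.ι (fun j => A.obj j) (i + N)

lemma ι_seqTailIncl (A : ℕ ⥤ C) (N i : ℕ) :
    Sigma.ι (fun j => (seqTail A N).obj j) i ≫ seqTailIncl A N =
      Sigma.ι (fun j => A.obj j) (i + N) :=
  Sigma.ι_desc _ _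

lemma sigmaMap_toSeqTail_comp_seqTailIncl (A : ℕ ⥤ C) (N : ℕ) :
    Limits.Sigma.map (toSeqTail A N).app ≫ seqTailIncl A N = End.of (seqShift C A) ^ N :=
  Sigma.hom_ext _ _ fun i => by
    rw [Sigma.ι_map_assoc, ι_seqTailIncl, ι_seqShift_pow]
    rfl

lemma seqTailIncl_comp_seqShift (A : ℕ ⥤ C) (N : ℕ) :
    seqTailIncl A N ≫ seqShift C A = seqShift C (seqTail A N) ≫ seqTailIncl A N :=
  Sigma.hom_ext _ _ fun i => by
    rw [reassoc_of% ι_seqTailIncl, ι_seqShift, reassoc_of% ι_seqShift, ι_seqTailIncl]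
    exact map_comp_ι_eq _ _ (by omega)

lemma sigmaMap_toSeqTail_comp_sigmaDesc {A : ℕ ⥤ C} (c : Cocone A) (N : ℕ) :
    Limits.Sigma.map (toSeqTail A N).app ≫ sigmaDesc (seqTailCocone c N) = sigmaDesc c :=
  Sigma.hom_ext _ _ fun i => by
    rw [Sigma.ι_map_assoc, ι_sigmaDesc, ι_sigmaDesc]
    exact c.w _

end Sequences

section Telescope

variable {C : Type*} [Category C] [Preadditive C] [HasColimitsOfShape (Discrete ℕ) C]

/-- `Hom(D, -)` turns `∐ A --(1 - shift)--> ∐ A --(sigmaDesc c)--> c.pt` into an exact sequence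
`0 ⟶ Hom(D, ∐ A) ⟶ Hom(D, ∐ A) ⟶ Hom(D, c.pt)`. -/
def TelescopeExact (A : ℕ ⥤ C) (c : Cocone A) (D : C) : Prop :=
  (∀ x : D ⟶ ∐ fun i => A.obj i, x ≫ (𝟙 _ - seqShift C A) = 0 → x = 0) ∧
    ∀ x : D ⟶ ∐ fun i => A.obj i, x ≫ sigmaDesc c = 0 → ∃ u, x = u ≫ (𝟙 _ - seqShift C A)

lemma one_sub_seqShift_pow (A : ℕ ⥤ C) (N : ℕ) :
    𝟙 _ - End.of (seqShift C A) ^ N =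
      (∑ j ∈ Finset.range N, End.of (seqShift C A) ^ j) ≫ (𝟙 _ - seqShift C A) :=
  (mul_neg_geom_sum (End.of (seqShift C A)) N).symm

variable {A : ℕ ⥤ C} {c : Cocone A} {D : C}

lemma TelescopeExact.of_seqTail (N : ℕ)
    (h : TelescopeExact (seqTail A N) (seqTailCocone c N) D) : TelescopeExact A c D := by
  have hp := sigmaMap_comp_seqShift (toSeqTail A N)
  have hpow := sigmaMap_toSeqTail_comp_seqTailIncl A N
  constructor
  · intro x hx
    rw [Preadditive.comp_sub, Category.comp_id, sub_eq_zero] at hx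
    have hxp : x ≫ Limits.Sigma.map (toSeqTail A N).app = 0 := h.1 _ (by
      rw [Category.assoc, Preadditive.comp_sub, Category.comp_id, hp, Preadditive.comp_sub,
        ← Category.assoc, ← hx, sub_self])
    rw [← comp_seqShift_pow_of_comp_seqShift hx.symm N, ← hpow, ← Category.assoc, hxp,
      zero_comp]
  · intro x hx
    obtain ⟨u, hu⟩ := h.2 (x ≫ Limits.Sigma.map (toSeqTail A N).app)
      (by rw [Category.assoc, sigmaMap_toSeqTail_comp_sigmaDesc, hx])
    refine ⟨x ≫ (∑ j ∈ Finset.range N, End.of (seqShift C A) ^ j) + u ≫ seqTailIncl A N, ?_⟩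
    calc x = x ≫ (𝟙 _ - End.of (seqShift C A) ^ N) +
          (x ≫ Limits.Sigma.map (toSeqTail A N).app) ≫ seqTailIncl A N := by
          rw [Category.assoc, hpow, Preadditive.comp_sub, Category.comp_id, sub_add_cancel]
      _ = _ := by
          rw [one_sub_seqShift_pow, hu, Preadditive.add_comp, Category.assoc, Category.assoc,
            Category.assoc, Preadditive.sub_comp, Preadditive.comp_sub, Category.id_comp,
            Category.comp_id, ← seqTailIncl_comp_seqShift,
            Preadditive.comp_sub (seqTailIncl A N), Category.comp_id]

lemma TelescopeExact.of_sigmaMap {B : ℕ ⥤ C} (α : A ⟶ B) {c : Cocone B}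
    (hA : TelescopeExact A ((Cocone.precompose α).obj c) D)
    (hα : ∀ y : D ⟶ ∐ fun i => B.obj i, ∃ y', y = y' ≫ Limits.Sigma.map α.app)
    (hα' : ∀ y' : D ⟶ ∐ fun i => A.obj i, y' ≫ Limits.Sigma.map α.app = 0 → y' = 0) :
    TelescopeExact B c D := by
  have hsub : Limits.Sigma.map α.app ≫ (𝟙 _ - seqShift C B) =
      (𝟙 _ - seqShift C A) ≫ Limits.Sigma.map α.app := by
    rw [Preadditive.comp_sub, Preadditive.sub_comp, sigmaMap_comp_seqShift, Category.comp_id,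
      Category.id_comp]
  constructor
  · intro y hy
    obtain ⟨y', rfl⟩ := hα y
    rw [hA.1 y' (hα' _ (by rw [Category.assoc, ← hsub, ← Category.assoc, hy])), zero_comp]
  · intro y hy
    obtain ⟨y', rfl⟩ := hα y
    obtain ⟨u, rfl⟩ := hA.2 y' (by rw [← sigmaMap_comp_sigmaDesc, ← Category.assoc, hy])
    exact ⟨u ≫ Limits.Sigma.map α.app, by rw [Category.assoc, Category.assoc, hsub]⟩

lemma telescopeExact_constSeq {K : C} {c : Cocone (constSeq K)}
    (h : ∀ z : D ⟶ K, z ≫ c.ι.app 0 = 0 → z = 0) : TelescopeExact (constSeq K) c D := by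
  let σ : (∐ fun _ : ℕ => K) ⟶ ∐ fun _ : ℕ => K :=
    Sigma.desc fun i => -∑ j ∈ Finset.range i, Sigma.ι (fun _ : ℕ => K) j
  let fold : (∐ fun _ : ℕ => K) ⟶ K := Sigma.desc fun _ => 𝟙 K
  have hs : ∀ i, Sigma.ι (fun _ : ℕ => K) i ≫ (𝟙 _ - seqShift C (constSeq K)) =
      Sigma.ι (fun _ : ℕ => K) i - Sigma.ι (fun _ : ℕ => K) (i + 1) := fun i => by
    rw [Preadditive.comp_sub, Category.comp_id, ι_seqShift (constSeq K) i]
    exact congrArg (_ - ·) (Category.id_comp _)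
  have hσ : (𝟙 _ - seqShift C (constSeq K)) ≫ σ = 𝟙 _ := Sigma.hom_ext _ _ fun i => by
    rw [reassoc_of% hs, Preadditive.sub_comp, Sigma.ι_desc, Sigma.ι_desc, Category.comp_id,
      Finset.sum_range_succ]
    abel
  have hσ' : σ ≫ (𝟙 _ - seqShift C (constSeq K)) = 𝟙 _ - fold ≫ Sigma.ι (fun _ : ℕ => K) 0 :=
    Sigma.hom_ext _ _ fun i => by
      rw [Sigma.ι_desc_assoc, Preadditive.neg_comp, Preadditive.sum_comp,
        Finset.sum_congr rfl fun j _ => hs j, Finset.sum_range_sub', Preadditive.comp_sub,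
        Category.comp_id, Sigma.ι_desc_assoc, Category.id_comp, neg_sub]
  have hfold : sigmaDesc c = fold ≫ c.ι.app 0 := Sigma.hom_ext _ _ fun i => by
    rw [ι_sigmaDesc, Sigma.ι_desc_assoc, Category.id_comp]
    simpa using c.w (homOfLE (Nat.zero_le i))
  constructor
  · intro x hx
    rw [← Category.comp_id x, ← hσ, ← Category.assoc, hx, zero_comp]
  · intro x hx
    have hx' : x ≫ fold = 0 := h _ (by rw [Category.assoc, ← hfold, hx])
    refine ⟨x ≫ σ, ?_⟩
    rw [Category.assoc, hσ', Preadditive.comp_sub, Category.comp_id, reassoc_of% hx',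
      zero_comp, sub_zero]

end Telescope

section Shift

variable {C : Type*} [Category C] [Preadditive C] [HasShift C ℤ]
  [∀ n : ℤ, (shiftFunctor C n).Additive]

lemma eq_zero_of_comp_shift_map_eq_zero {D V W : C} {f : V ⟶ W}
    (hf : ∀ g : D⟦(-1 : ℤ)⟧ ⟶ V, g ≫ f = 0 → g = 0) {g : D ⟶ V⟦(1 : ℤ)⟧}
    (hg : g ≫ f⟦(1 : ℤ)⟧' = 0) : g = 0 := by
  let e := shiftFunctorCompIsoId C (1 : ℤ) (-1) (by omega)
  have h : g⟦(-1 : ℤ)⟧' ≫ e.hom.app V = 0 := hf _ (by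
    rw [Category.assoc, ← Functor.id_map f, ← e.hom.naturality f, ← Category.assoc,
      Functor.comp_map, ← Functor.map_comp, hg, Functor.map_zero, zero_comp])
  apply (shiftFunctor C (-1 : ℤ)).map_injective
  rw [Functor.map_zero, ← cancel_mono (e.hom.app V), h, zero_comp]

end Shift

section Hocolim

variable {C : Type*} [Category C] [HasZeroObject C] [HasShift C ℤ] [Preadditive C]
  [∀ n : ℤ, (shiftFunctor C n).Additive] [Pretriangulated C] [HasColimitsOfShape (Discrete ℕ) C]
  {A : ℕ ⥤ C} {X : C} {π : (∐ fun i => A.obj i) ⟶ X}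

lemma IsHocolim.exists_comp_eq_sigmaDesc (hX : IsHocolim C A X π) (c : Cocone A) :
    ∃ ψ : X ⟶ c.pt, π ≫ ψ = sigmaDesc c := by
  obtain ⟨w, hw⟩ := hX
  have h : (𝟙 _ - seqShift C A) ≫ sigmaDesc c = 0 := by
    rw [Preadditive.sub_comp, Category.id_comp, seqShift_comp_sigmaDesc, sub_self]
  obtain ⟨ψ, hψ⟩ := Triangle.yoneda_exact₂ _ hw (sigmaDesc c) h
  exact ⟨ψ, hψ.symm⟩

lemma IsHocolim.eq_zero_of_comp_eq_zero (hX : IsHocolim C A X π) {c : Cocone A}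
    {ψ : X ⟶ c.pt} (hψ : π ≫ ψ = sigmaDesc c) {D : C} (h₁ : TelescopeExact A c (D⟦(-1 : ℤ)⟧))
    (h₂ : TelescopeExact A c D) {f : D ⟶ X} (hf : f ≫ ψ = 0) : f = 0 := by
  obtain ⟨w, hw⟩ := hX
  have hw₃ : w ≫ (𝟙 _ - seqShift C A)⟦(1 : ℤ)⟧' = 0 := comp_distTriang_mor_zero₃₁ _ hw
  have hfw : f ≫ w = 0 :=
    eq_zero_of_comp_shift_map_eq_zero h₁.1 (by rw [Category.assoc, hw₃, comp_zero])
  obtain ⟨ξ, rfl⟩ : ∃ ξ : D ⟶ ∐ fun i => A.obj i, f = ξ ≫ π :=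
    Triangle.coyoneda_exact₂ _ (rot_of_distTriang _ hw) f hfw
  obtain ⟨u, rfl⟩ := h₂.2 ξ (by rw [← hψ, ← Category.assoc, hf])
  have hw₁ : (𝟙 _ - seqShift C A) ≫ π = 0 := comp_distTriang_mor_zero₁₂ _ hw
  rw [Category.assoc, hw₁, comp_zero]

end Hocolim

section TruncationSequence

variable {C : Type*} [Category C] [HasZeroObject C] [HasShift C ℤ] [Preadditive C]
  [∀ n : ℤ, (shiftFunctor C n).Additive] [Pretriangulated C] (t : TData C)

namespace TData

abbrev truncCocone (Y : C) : Cocone (truncSeq C t Y) where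
  pt := Y
  ι.app i := (t.truncLEπ ((i : ℤ) + 1)).app Y
  ι.naturality _ _ _ := by
    dsimp [truncSeq]
    rw [Category.comp_id, truncLEle_app_comp_truncLEπ_app]

lemma exists_eq_comp_truncCocone_ι {m : ℤ} {D Y : C} (hD : D ∈ t.le m) (f : D ⟶ Y) :
    ∃ (i : ℕ) (g : D ⟶ (truncSeq C t Y).obj i), f = g ≫ (t.truncCocone Y).ι.app i := by
  obtain ⟨δ, hT⟩ := t.trunc_triangle ((m.toNat : ℤ) + 1) Y
  exact ⟨m.toNat, exists_eq_comp_of_distTriang hT (t.truncGE_mem _ Y) hD (by omega) f⟩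

lemma isIso_of_forall_mem_le (hnd : ∀ X : C, (∀ n : ℤ, X ∈ t.ge n) → IsZero X) {X Y : C}
    (ψ : X ⟶ Y) (hsurj : ∀ m (D : C), D ∈ t.le m → ∀ f : D ⟶ Y, ∃ e, f = e ≫ ψ)
    (hinj : ∀ m (D : C), D ∈ t.le m → ∀ f : D ⟶ X, f ≫ ψ = 0 → f = 0) : IsIso ψ := by
  obtain ⟨Z, g, h, hT⟩ := distinguished_cocone_triangle ψ
  have hZ : ∀ m, ∀ D ∈ t.le m, ∀ φ : D ⟶ Z, φ = 0 := by
    intro m D hD φ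
    have hh : h ≫ ψ⟦(1 : ℤ)⟧' = 0 := comp_distTriang_mor_zero₃₁ _ hT
    have hφh : φ ≫ h = 0 := eq_zero_of_comp_shift_map_eq_zero
      (hinj (m + 1) _ (t.shift_neg_one_mem_le hD)) (by rw [Category.assoc, hh, comp_zero])
    obtain ⟨d, rfl⟩ : ∃ d : D ⟶ Y, φ = d ≫ g :=
      Triangle.coyoneda_exact₂ _ (rot_of_distTriang _ hT) φ hφh
    obtain ⟨e, rfl⟩ := hsurj m D hD d
    have hg : ψ ≫ g = 0 := comp_distTriang_mor_zero₁₂ _ hT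
    rw [Category.assoc, hg, comp_zero]
  have hZ : IsZero Z := hnd Z fun n => by
    simpa using t.mem_ge_of_forall_hom_eq_zero (hZ (n - 1))
  exact (Triangle.isZero₃_iff_isIso₁ _ hT).mp hZ

variable [HasColimitsOfShape (Discrete ℕ) C] {r : ℤ}
  (hcoprod : ∀ X : ℕ → C, (∀ i, X i ∈ t.ge 0) → (∐ X) ∈ t.ge (-r))
include hcoprod

lemma sigma_mem_ge (k : ℕ) : ∀ {X : ℕ → C}, (∀ i, X i ∈ t.ge k) → (∐ X) ∈ t.ge (k - r) := by
  induction k with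
  | zero => exact fun hX => by simpa using hcoprod _ hX
  | succ k ih =>
    intro X hX
    have h₁ : (∐ X)⟦(1 : ℤ)⟧ ∈ t.ge (k - r) :=
      t.ge_iso _ (asIso (sigmaComparison (shiftFunctor C (1 : ℤ)) X))
        (ih fun i => by simpa using t.ge_shift _ (hX i))
    have h₂ := t.ge_iso _ ((shiftFunctorCompIsoId C (1 : ℤ) (-1) (by omega)).app (∐ X))
      (t.shift_neg_one_mem_ge h₁)
    rwa [show ((k + 1 : ℕ) : ℤ) - r = k - r + 1 by push_cast; ring]

lemma telescopeExact_truncSeq (Y : C) {m : ℤ} {D : C} (hD : D ∈ t.le m) :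
    TelescopeExact (truncSeq C t Y) (t.truncCocone Y) D := by
  obtain ⟨N, hNr, hNm⟩ : ∃ N : ℕ, m + r < N ∧ m < N :=
    ⟨(m + max r 0 + 1).toNat, by omega, by omega⟩
  have hle : ∀ i : ℕ, (N : ℤ) ≤ ((i + N : ℕ) : ℤ) + 1 := fun i => by omega
  let α : constSeq ((t.truncLE N).obj Y) ⟶ seqTail (truncSeq C t Y) N :=
    { app i := (t.truncLEle (hle i)).app Y
      naturality _ _ _ := by
        dsimp [truncSeq]
        rw [Category.id_comp, truncLEle_app_comp_truncLEle_app] }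
  choose E g e hT using fun i => distinguished_cocone_triangle (α.app i)
  have hE : (∐ E) ∈ t.ge (N + 1 - r) :=
    t.sigma_mem_ge hcoprod (N + 1) fun i => t.mem_ge_of_distTriang_truncLEle (hle i) (hT i)
  have hcop := coproductTriangle_distinguished hT
  refine TelescopeExact.of_seqTail N (TelescopeExact.of_sigmaMap α (telescopeExact_constSeq ?_)
    (exists_eq_comp_of_distTriang hcop hE hD (by omega))
    (fun _ => eq_zero_of_distTriang hcop hE hD (by omega)))
  obtain ⟨δ, hTN⟩ := t.trunc_triangle N Y
  intro z hz
  refine eq_zero_of_distTriang hTN (t.truncGE_mem _ Y) hD (by omega) ?_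
  rw [← t.truncLEle_app_comp_truncLEπ_app (hle 0)]
  exact hz

end TData

end TruncationSequence

theorem statement15 (t : TData T)
    (hnd : ∀ X : T, (∀ n : ℤ, X ∈ t.ge n) → IsZero X)
    (r : ℤ)
    (hcoprod : ∀ X : ℕ → T, (∀ i, X i ∈ t.ge 0) → (∐ X) ∈ t.ge (-r))
    (Y X : T) (π : (∐ fun i => (truncSeq T t Y).obj i) ⟶ X)
    (hX : IsHocolim T (truncSeq T t Y) X π) :
    ∃ ψ : X ⟶ Y, IsIso ψ ∧
      ∀ i : ℕ, (Sigma.ι (fun i => (truncSeq T t Y).obj i) i ≫ π) ≫ ψ =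
        (t.truncLEπ ((i : ℤ) + 1)).app Y := by
  obtain ⟨ψ, hψ⟩ := hX.exists_comp_eq_sigmaDesc (t.truncCocone Y)
  refine ⟨ψ, t.isIso_of_forall_mem_le hnd ψ (fun m D hD f => ?_) (fun m D hD f hf => ?_),
    fun i => by rw [Category.assoc, hψ, ι_sigmaDesc]⟩
  · obtain ⟨i, g, rfl⟩ := t.exists_eq_comp_truncCocone_ι hD f
    exact ⟨g ≫ Sigma.ι _ i ≫ π, by rw [← ι_sigmaDesc, ← hψ, Category.assoc, Category.assoc]⟩
  · exact hX.eq_zero_of_comp_eq_zero hψ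
      (t.telescopeExact_truncSeq hcoprod Y (t.shift_neg_one_mem_le hD))
      (t.telescopeExact_truncSeq hcoprod Y hD) hf

end Paper
end
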